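/- arXiv:2507.17026 — 8 statements merged into one kernel-verified Lean document; each statement's English description precedes it below -/
import Mathlib

section
/- Let p and q be two probability densities on a measurable space 𝒳 with p(x) > 0 and q(x) > 0 for all x ∈ 𝒳, and let r(x) := p(x)/q(x). Then AUC(r) ≥ (1 + TV(p,q))/2, where TV(p,q) := (1/2)∫|p(x) − q(x)| dx is the total variation distance. -/
open MeasureTheory
open scoped ENNReal

/-- The distribution on `𝒳` with density `p` w.r.t. the base measure `lam`. -/
noncomputable def densMeasure {𝒳 : Type*} [MeasurableSpace 𝒳] (lam : Measure 𝒳) (p : 𝒳 → ℝ) :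
    Measure 𝒳 := lam.withDensity fun x => ENNReal.ofReal (p x)

/-- `auc μ ν s = P(s(X) > s(X̃)) + ½ P(s(X) = s(X̃))` for independent `X ~ μ`, `X̃ ~ ν`. -/
noncomputable def auc {𝒳 : Type*} [MeasurableSpace 𝒳] (μ ν : Measure 𝒳) (s : 𝒳 → ℝ) : ℝ :=
  ((μ.prod ν) {z : 𝒳 × 𝒳 | s z.2 < s z.1}).toReal +
    (1 / 2) * ((μ.prod ν) {z : 𝒳 × 𝒳 | s z.1 = s z.2}).toReal

/-- `tvDist lam p q = ½ ∫ |p − q| dλ`, the total variation distance between the densities. -/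
noncomputable def tvDist {𝒳 : Type*} [MeasurableSpace 𝒳] (lam : Measure 𝒳) (p q : 𝒳 → ℝ) : ℝ :=
  (1 / 2) * ∫ x, |p x - q x| ∂lam

private lemma prod_wd_apply {𝒳 : Type*} [MeasurableSpace 𝒳] (lam : Measure 𝒳) [SigmaFinite lam]
    (P Q : 𝒳 → ℝ≥0∞) (hP : Measurable P) (hQ : Measurable Q)
    {s : Set (𝒳 × 𝒳)} (hs : MeasurableSet s) :
    ((lam.withDensity P).prod (lam.withDensity Q)) s
      = ∫⁻ z in s, P z.1 * Q z.2 ∂(lam.prod lam) := by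
  rw [Measure.prod_apply hs]
  have h1 : ∀ x, (lam.withDensity Q) (Prod.mk x ⁻¹' s) = ∫⁻ y in Prod.mk x ⁻¹' s, Q y ∂lam :=
    fun x => withDensity_apply _ (measurable_prodMk_left hs)
  have hg : Measurable fun x => ∫⁻ y in Prod.mk x ⁻¹' s, Q y ∂lam := by
    simp_rw [← h1]; exact measurable_measure_prodMk_left hs
  simp_rw [h1]
  rw [lintegral_withDensity_eq_lintegral_mul _ hP hg]
  have hFm : Measurable fun z : 𝒳 × 𝒳 => P z.1 * Q z.2 :=
    (hP.comp measurable_fst).mul (hQ.comp measurable_snd)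
  rw [← lintegral_indicator hs, lintegral_prod _ ((hFm.indicator hs).aemeasurable)]
  congr 1
  funext x
  have : ∀ y, s.indicator (fun z : 𝒳 × 𝒳 => P z.1 * Q z.2) (x, y)
      = (Prod.mk x ⁻¹' s).indicator (fun y => P x * Q y) y := by
    intro y
    by_cases h : (x, y) ∈ s <;> simp [Set.indicator_apply, h]
  simp_rw [this]
  rw [lintegral_indicator (measurable_prodMk_left hs), lintegral_const_mul _ hQ]
  simp

private lemma ofReal_integral_le {α : Type*} [MeasurableSpace α] {μ : Measure α} {f : α → ℝ}
    (hf : Integrable f μ) :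
    ENNReal.ofReal (∫ x, f x ∂μ) ≤ ∫⁻ x, ENNReal.ofReal (f x) ∂μ := by
  have h1 : ∫ x, f x ∂μ ≤ ∫ x, max (f x) 0 ∂μ :=
    integral_mono hf hf.pos_part (fun x => le_max_left _ _)
  calc ENNReal.ofReal (∫ x, f x ∂μ) ≤ ENNReal.ofReal (∫ x, max (f x) 0 ∂μ) :=
        ENNReal.ofReal_le_ofReal h1
    _ = ∫⁻ x, ENNReal.ofReal (max (f x) 0) ∂μ :=
        ofReal_integral_eq_lintegral_ofReal hf.pos_part
          (Filter.Eventually.of_forall fun x => le_max_right _ _)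
    _ = ∫⁻ x, ENNReal.ofReal (f x) ∂μ := by
        congr 1; funext x
        rcases le_total (f x) 0 with h | h
        · rw [max_eq_right h, ENNReal.ofReal_zero, ENNReal.ofReal_eq_zero.mpr h]
        · rw [max_eq_left h]

/-- For strictly positive probability densities `p, q` with density ratio `r = p/q`,
`AUC(p/q) ≥ (1 + TV(p,q))/2`. -/
theorem stmt2 {𝒳 : Type*} [MeasurableSpace 𝒳] (lam : Measure 𝒳) [SigmaFinite lam]
    (p q : 𝒳 → ℝ) (hpm : Measurable p) (hqm : Measurable q)
    (hp0 : ∀ x, 0 < p x) (hq0 : ∀ x, 0 < q x)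
    (hp1 : ∫ x, p x ∂lam = 1) (hq1 : ∫ x, q x ∂lam = 1) :
    auc (densMeasure lam p) (densMeasure lam q) (fun x => p x / q x) ≥
      (1 + tvDist lam p q) / 2 := by
  classical
  -- integrability
  have hpInt : Integrable p lam := by
    by_contra h; rw [integral_undef h] at hp1; norm_num at hp1
  have hqInt : Integrable q lam := by
    by_contra h; rw [integral_undef h] at hq1; norm_num at hq1
  set P : 𝒳 → ℝ≥0∞ := fun x => ENNReal.ofReal (p x) with hP_def
  set Q : 𝒳 → ℝ≥0∞ := fun x => ENNReal.ofReal (q x) with hQ_def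
  have hPm : Measurable P := hpm.ennreal_ofReal
  have hQm : Measurable Q := hqm.ennreal_ofReal
  have hPint : ∫⁻ x, P x ∂lam = 1 := by
    rw [hP_def, ← ofReal_integral_eq_lintegral_ofReal hpInt
      (Filter.Eventually.of_forall fun x => (hp0 x).le), hp1, ENNReal.ofReal_one]
  have hQint : ∫⁻ x, Q x ∂lam = 1 := by
    rw [hQ_def, ← ofReal_integral_eq_lintegral_ofReal hqInt
      (Filter.Eventually.of_forall fun x => (hq0 x).le), hq1, ENNReal.ofReal_one]
  have hrm : Measurable fun x => p x / q x := hpm.div hqm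
  set A : Set (𝒳 × 𝒳) := {z | p z.2 / q z.2 < p z.1 / q z.1} with hA_def
  set D : Set (𝒳 × 𝒳) := {z | p z.1 / q z.1 = p z.2 / q z.2} with hD_def
  set A' : Set (𝒳 × 𝒳) := {z | p z.1 / q z.1 < p z.2 / q z.2} with hA'_def
  have hAm : MeasurableSet A :=
    measurableSet_lt (hrm.comp measurable_snd) (hrm.comp measurable_fst)
  have hDm : MeasurableSet D :=
    measurableSet_eq_fun (hrm.comp measurable_fst) (hrm.comp measurable_snd)
  have hA'm : MeasurableSet A' :=
    measurableSet_lt (hrm.comp measurable_fst) (hrm.comp measurable_snd)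
  set m2 : Measure (𝒳 × 𝒳) := lam.prod lam with hm2_def
  set F : 𝒳 × 𝒳 → ℝ≥0∞ := fun z => P z.1 * Q z.2 with hF_def
  set G : 𝒳 × 𝒳 → ℝ≥0∞ := fun z => P z.2 * Q z.1 with hG_def
  set H : 𝒳 × 𝒳 → ℝ≥0∞ := fun z => ENNReal.ofReal (p z.1 * q z.2 - p z.2 * q z.1) with hH_def
  have hFm : Measurable F := (hPm.comp measurable_fst).mul (hQm.comp measurable_snd)
  have hGm : Measurable G := (hPm.comp measurable_snd).mul (hQm.comp measurable_fst)
  have hHm : Measurable H :=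
    (((hpm.comp measurable_fst).mul (hqm.comp measurable_snd)).sub
      ((hpm.comp measurable_snd).mul (hqm.comp measurable_fst))).ennreal_ofReal
  -- total mass
  have htot : ∫⁻ z, F z ∂m2 = 1 := by
    rw [hm2_def, hF_def, lintegral_prod_mul hPm.aemeasurable hQm.aemeasurable, hPint, hQint,
      one_mul]
  -- partition
  have hunion : A ∪ D ∪ A' = Set.univ := by
    ext z
    simp only [Set.mem_union, Set.mem_setOf_eq, Set.mem_univ, iff_true, hA_def, hD_def, hA'_def]
    rcases lt_trichotomy (p z.1 / q z.1) (p z.2 / q z.2) with h | h | h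
    · right; exact h
    · left; right; exact h
    · left; left; exact h
  have hdisjAD : Disjoint A D := by
    rw [Set.disjoint_left]; intro z hz hz'
    have h1 : p z.2 / q z.2 < p z.1 / q z.1 := hz
    have h2 : p z.1 / q z.1 = p z.2 / q z.2 := hz'
    exact absurd h2 (ne_of_gt h1)
  have hdisjADA' : Disjoint (A ∪ D) A' := by
    rw [Set.disjoint_left]; intro z hz hz'
    have h2 : p z.1 / q z.1 < p z.2 / q z.2 := hz'
    rcases hz with hz | hz
    · have h1 : p z.2 / q z.2 < p z.1 / q z.1 := hz
      exact lt_asymm h1 h2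
    · have h1 : p z.1 / q z.1 = p z.2 / q z.2 := hz
      rw [h1] at h2
      exact lt_irrefl _ h2
  have hsplit : (∫⁻ z in A, F z ∂m2) + (∫⁻ z in D, F z ∂m2) + (∫⁻ z in A', F z ∂m2) = 1 := by
    rw [← lintegral_union hDm hdisjAD, ← lintegral_union hA'm hdisjADA', hunion,
      Measure.restrict_univ, htot]
  -- swap
  have hswap : ∫⁻ z in A', F z ∂m2 = ∫⁻ z in A, G z ∂m2 := by
    rw [← lintegral_indicator hA'm, ← lintegral_indicator hAm]
    have hswap' := lintegral_prod_swap (μ := lam) (ν := lam) (A'.indicator F)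
    have heq : (fun z : 𝒳 × 𝒳 => A'.indicator F z.swap) = A.indicator G := by
      funext z
      by_cases h : z ∈ A
      · have h' : z.swap ∈ A' := h
        rw [Set.indicator_of_mem h' F, Set.indicator_of_mem h G]
        rfl
      · have h' : z.swap ∉ A' := h
        rw [Set.indicator_of_notMem h' F, Set.indicator_of_notMem h G]
    rw [← hswap', heq]
  -- pointwise decomposition on A
  have hdecomp : ∫⁻ z in A, F z ∂m2 = (∫⁻ z in A, G z ∂m2) + ∫⁻ z in A, H z ∂m2 := by
    rw [← lintegral_add_right _ hHm]
    refine setLIntegral_congr_fun hAm (fun z hz => ?_)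
    have hlt : p z.2 * q z.1 < p z.1 * q z.2 := by
      have := (div_lt_div_iff₀ (hq0 z.2) (hq0 z.1)).mp hz
      linarith
    have h1 : F z = ENNReal.ofReal (p z.1 * q z.2) :=
      (ENNReal.ofReal_mul (hp0 z.1).le).symm
    have h2 : G z = ENNReal.ofReal (p z.2 * q z.1) :=
      (ENNReal.ofReal_mul (hp0 z.2).le).symm
    show F z = G z + H z
    rw [h1, h2]
    have h3 : H z = ENNReal.ofReal (p z.1 * q z.2 - p z.2 * q z.1) := rfl
    rw [h3, ← ENNReal.ofReal_add
      (mul_nonneg (hp0 z.2).le (hq0 z.1).le) (sub_nonneg.mpr hlt.le)]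
    congr 1
    ring
  -- H vanishes off A
  have hHfull : ∫⁻ z in A, H z ∂m2 = ∫⁻ z, H z ∂m2 := by
    have hsum' := lintegral_add_compl H hAm (μ := m2)
    have hzero : ∫⁻ z in Aᶜ, H z ∂m2 = 0 := by
      have : ∫⁻ z in Aᶜ, H z ∂m2 = ∫⁻ z in Aᶜ, 0 ∂m2 := by
        refine setLIntegral_congr_fun hAm.compl (fun z hz => ?_)
        have hle : p z.1 / q z.1 ≤ p z.2 / q z.2 := not_lt.mp hz
        have : p z.1 * q z.2 ≤ p z.2 * q z.1 := by
          have := (div_le_div_iff₀ (hq0 z.1) (hq0 z.2)).mp hle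
          linarith
        simp [hH_def, ENNReal.ofReal_eq_zero.mpr (sub_nonpos.mpr this)]
      rw [this, lintegral_zero]
    rw [hzero, add_zero] at hsum'
    exact hsum'
  -- Tonelli + inner bound
  have hinner : ∀ x, ENNReal.ofReal (p x - q x)
      ≤ ∫⁻ y, ENNReal.ofReal (p x * q y - p y * q x) ∂lam := by
    intro x
    have hInt : Integrable (fun y => p x * q y - p y * q x) lam :=
      (hqInt.const_mul (p x)).sub (hpInt.mul_const (q x))
    have hIeq : ∫ y, (p x * q y - p y * q x) ∂lam = p x - q x := by
      rw [integral_sub (hqInt.const_mul _) (hpInt.mul_const _), integral_const_mul,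
        integral_mul_const, hp1, hq1, mul_one, one_mul]
    calc ENNReal.ofReal (p x - q x)
        = ENNReal.ofReal (∫ y, (p x * q y - p y * q x) ∂lam) := by rw [hIeq]
      _ ≤ ∫⁻ y, ENNReal.ofReal (p x * q y - p y * q x) ∂lam := ofReal_integral_le hInt
  have hH_ge : (∫⁻ x, ENNReal.ofReal (p x - q x) ∂lam) ≤ ∫⁻ z, H z ∂m2 := by
    rw [hm2_def, hH_def, lintegral_prod _ hHm.aemeasurable]
    exact lintegral_mono hinner
  -- TV link
  have hsubInt : Integrable (fun x => p x - q x) lam := hpInt.sub hqInt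
  have habsInt : Integrable (fun x => |p x - q x|) lam := hsubInt.abs
  have hTV0 : 0 ≤ tvDist lam p q := by
    rw [tvDist]
    have : 0 ≤ ∫ x, |p x - q x| ∂lam := integral_nonneg fun x => abs_nonneg _
    linarith
  have hT : (∫⁻ x, ENNReal.ofReal (p x - q x) ∂lam) = ENNReal.ofReal (tvDist lam p q) := by
    have hmax : (fun x => ENNReal.ofReal (p x - q x))
        = fun x => ENNReal.ofReal (max (p x - q x) 0) := by
      funext x
      rcases le_total (p x - q x) 0 with h | h
      · rw [max_eq_right h, ENNReal.ofReal_zero, ENNReal.ofReal_eq_zero.mpr h]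
      · rw [max_eq_left h]
    have hmaxInt : Integrable (fun x => max (p x - q x) 0) lam := hsubInt.pos_part
    have hmaxVal : ∫ x, max (p x - q x) 0 ∂lam = tvDist lam p q := by
      have heq : (fun x => max (p x - q x) 0)
          = fun x => ((p x - q x) + |p x - q x|) / 2 := by
        funext x
        rcases le_total 0 (p x - q x) with h | h
        · rw [max_eq_left h, abs_of_nonneg h]; ring
        · rw [max_eq_right h, abs_of_nonpos h]; ring
      rw [heq, integral_div, integral_add hsubInt habsInt,
        integral_sub hpInt hqInt, hp1, hq1, tvDist]
      ring
    rw [hmax, ← ofReal_integral_eq_lintegral_ofReal hmaxInt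
      (Filter.Eventually.of_forall fun x => le_max_right _ _), hmaxVal]
  -- finiteness
  have hIA_le : ∫⁻ z in A, F z ∂m2 ≤ 1 := htot ▸ setLIntegral_le_lintegral _ _
  have hID_le : ∫⁻ z in D, F z ∂m2 ≤ 1 := htot ▸ setLIntegral_le_lintegral _ _
  have hIA'_le : ∫⁻ z in A', F z ∂m2 ≤ 1 := htot ▸ setLIntegral_le_lintegral _ _
  have hIA_ne : ∫⁻ z in A, F z ∂m2 ≠ ⊤ := (lt_of_le_of_lt hIA_le ENNReal.one_lt_top).ne
  have hID_ne : ∫⁻ z in D, F z ∂m2 ≠ ⊤ := (lt_of_le_of_lt hID_le ENNReal.one_lt_top).ne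
  have hJ_ne : ∫⁻ z in A, G z ∂m2 ≠ ⊤ := by
    rw [← hswap]; exact (lt_of_le_of_lt hIA'_le ENNReal.one_lt_top).ne
  have hK_ne : ∫⁻ z, H z ∂m2 ≠ ⊤ := by
    have hle : ∫⁻ z, H z ∂m2 ≤ ∫⁻ z in A, F z ∂m2 := by
      rw [hdecomp, hHfull]; exact le_add_self
    exact (lt_of_le_of_lt (hle.trans hIA_le) ENNReal.one_lt_top).ne
  -- real versions
  set a : ℝ := (∫⁻ z in A, F z ∂m2).toReal with ha_def
  set d : ℝ := (∫⁻ z in D, F z ∂m2).toReal with hd_def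
  set j : ℝ := (∫⁻ z in A, G z ∂m2).toReal with hj_def
  set k : ℝ := (∫⁻ z, H z ∂m2).toReal with hk_def
  have hsum : a + d + j = 1 := by
    rw [ha_def, hd_def, hj_def, ← ENNReal.toReal_add hIA_ne hID_ne,
      ← ENNReal.toReal_add (ENNReal.add_ne_top.mpr ⟨hIA_ne, hID_ne⟩) hJ_ne,
      ← hswap, hsplit, ENNReal.toReal_one]
  have haj : a = j + k := by
    rw [ha_def, hj_def, hk_def, hdecomp, hHfull, ENNReal.toReal_add hJ_ne hK_ne]
  have hk_ge : tvDist lam p q ≤ k := by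
    have h1 : ENNReal.ofReal (tvDist lam p q) ≤ ∫⁻ z, H z ∂m2 := hT ▸ hH_ge
    have h2 := ENNReal.toReal_mono hK_ne h1
    rwa [ENNReal.toReal_ofReal hTV0] at h2
  -- assemble
  have hmA : (densMeasure lam p).prod (densMeasure lam q) A = ∫⁻ z in A, F z ∂m2 := by
    rw [densMeasure, densMeasure, hm2_def]
    exact prod_wd_apply lam P Q hPm hQm hAm
  have hmD : (densMeasure lam p).prod (densMeasure lam q) D = ∫⁻ z in D, F z ∂m2 := by
    rw [densMeasure, densMeasure, hm2_def]
    exact prod_wd_apply lam P Q hPm hQm hDm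
  have hauc : auc (densMeasure lam p) (densMeasure lam q) (fun x => p x / q x)
      = a + (1 / 2) * d := by
    rw [auc]
    have hsetA : {z : 𝒳 × 𝒳 | (fun x => p x / q x) z.2 < (fun x => p x / q x) z.1} = A := rfl
    have hsetD : {z : 𝒳 × 𝒳 | (fun x => p x / q x) z.1 = (fun x => p x / q x) z.2} = D := rfl
    rw [hsetA, hsetD, hmA, hmD]
  rw [hauc, ge_iff_le]
  have : d = 1 - a - j := by linarith
  rw [this]
  have : a - j = k := by linarith
  linarith
end

section
/- Let p and q be probability densities on 𝒳 with p, q > 0 everywhere and r(x) := p(x)/q(x). For each m, let U_m be the conformal p-value computed with score function r from m calibration samples X_1,…,X_m i.i.d. ~ p, a test point X̃ ~ q independent of the calibration samples, and an independent tie-breaking variable ξ ~ Uniform[0,1]. Then lim_{m→∞} E[U_m] = 1 − AUC(r) ≤ 1/2 − TV(p,q)/2; in particular, if p ≠ q then the limit is strictly less than 1/2. -/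
open MeasureTheory
open scoped ENNReal

open ProbabilityTheory Filter Topology

lemma densMeasure_isProb {𝒳 : Type*} [MeasurableSpace 𝒳] {lam : Measure 𝒳} {p : 𝒳 → ℝ}
    (hp0 : ∀ x, 0 ≤ p x) (hp1 : ∫ x, p x ∂lam = 1) :
    IsProbabilityMeasure (densMeasure lam p) := by
  constructor
  rw [densMeasure, withDensity_apply _ MeasurableSet.univ, Measure.restrict_univ,
    ← ofReal_integral_eq_lintegral_ofReal (integrable_of_integral_eq_one hp1)
      (Filter.Eventually.of_forall hp0), hp1, ENNReal.ofReal_one]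

/-- With calibration samples `X_1, X_2, …` i.i.d. from the density `p`, a test point
`X̃` from the density `q` independent of them, and an independent tie-breaking variable
`ξ ~ Uniform[0,1]`, the conformal p-values `U_m` computed with the oracle score `r = p/q` satisfy
`lim_{m→∞} E[U_m] = 1 − AUC(r) ≤ 1/2 − TV(p,q)/2`; if moreover `p ≠ q` the limit is `< 1/2`. -/
theorem stmt3 {𝒳 Ω : Type*} [MeasurableSpace 𝒳] [MeasurableSpace Ω]
    (lam : Measure 𝒳) [SigmaFinite lam]
    (p q : 𝒳 → ℝ) (hpm : Measurable p) (hqm : Measurable q)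
    (hp0 : ∀ x, 0 < p x) (hq0 : ∀ x, 0 < q x)
    (hp1 : ∫ x, p x ∂lam = 1) (hq1 : ∫ x, q x ∂lam = 1)
    (P : Measure Ω) [IsProbabilityMeasure P]
    (X : ℕ → Ω → 𝒳) (hXm : ∀ i, Measurable (X i))
    (Xt : Ω → 𝒳) (hXtm : Measurable Xt)
    (ξ : Ω → ℝ) (hξm : Measurable ξ)
    (hiid : iIndepFun X P)
    (hXlaw : ∀ i, Measure.map (X i) P = densMeasure lam p)
    (hXtlaw : Measure.map Xt P = densMeasure lam q)
    (hξlaw : Measure.map ξ P = volume.restrict (Set.Icc (0 : ℝ) 1))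
    (hindep : IndepFun (fun ω i => X i ω) (fun ω => (Xt ω, ξ ω)) P)
    (hindep2 : IndepFun Xt ξ P) :
    Tendsto (fun m : ℕ => ∫ ω, (1 / (m + 1 : ℝ)) *
          ((∑ i ∈ Finset.range m,
              if p (X i ω) / q (X i ω) < p (Xt ω) / q (Xt ω) then (1 : ℝ) else 0) +
            ξ ω * (1 + ∑ i ∈ Finset.range m,
              if p (X i ω) / q (X i ω) = p (Xt ω) / q (Xt ω) then (1 : ℝ) else 0)) ∂P)
        atTop
        (𝓝 (1 - auc (densMeasure lam p) (densMeasure lam q) (fun x => p x / q x))) ∧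
      1 - auc (densMeasure lam p) (densMeasure lam q) (fun x => p x / q x) ≤
        1 / 2 - tvDist lam p q / 2 ∧
      (¬ p =ᵐ[lam] q →
        1 - auc (densMeasure lam p) (densMeasure lam q) (fun x => p x / q x) < 1 / 2) := by
  classical
  have hp_int : Integrable p lam := integrable_of_integral_eq_one hp1
  have hq_int : Integrable q lam := integrable_of_integral_eq_one hq1
  set s : 𝒳 → ℝ := fun x => p x / q x with hs_def
  have hsapp : ∀ x, p x / q x = s x := fun x => rfl
  simp only [hsapp]
  have hsm : Measurable s := hpm.div hqm
  set μ := densMeasure lam p with hμ_def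
  set ν := densMeasure lam q with hν_def
  haveI hμP : IsProbabilityMeasure μ := densMeasure_isProb (fun x => (hp0 x).le) hp1
  haveI hνP : IsProbabilityMeasure ν := densMeasure_isProb (fun x => (hq0 x).le) hq1
  set Ulaw := volume.restrict (Set.Icc (0 : ℝ) 1) with hU_def
  -- measurable sets
  have hAset : MeasurableSet {z : 𝒳 × 𝒳 | s z.1 < s z.2} :=
    measurableSet_lt (hsm.comp measurable_fst) (hsm.comp measurable_snd)
  have hBset : MeasurableSet {z : 𝒳 × 𝒳 | s z.1 = s z.2} :=
    measurableSet_eq_fun (hsm.comp measurable_fst) (hsm.comp measurable_snd)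
  have hCset : MeasurableSet {z : 𝒳 × 𝒳 | s z.2 < s z.1} :=
    measurableSet_lt (hsm.comp measurable_snd) (hsm.comp measurable_fst)
  set a := ((μ.prod ν) {z : 𝒳 × 𝒳 | s z.1 < s z.2}).toReal with ha_def
  set b := ((μ.prod ν) {z : 𝒳 × 𝒳 | s z.1 = s z.2}).toReal with hb_def
  set c := ((μ.prod ν) {z : 𝒳 × 𝒳 | s z.2 < s z.1}).toReal with hc_def
  -- a + b + c = 1
  have hdisjAB : Disjoint {z : 𝒳 × 𝒳 | s z.1 < s z.2} {z : 𝒳 × 𝒳 | s z.1 = s z.2} := by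
    rw [Set.disjoint_left]
    intro z hz1 hz2
    exact absurd hz2 (ne_of_lt hz1)
  have hdisjC : Disjoint ({z : 𝒳 × 𝒳 | s z.1 < s z.2} ∪ {z : 𝒳 × 𝒳 | s z.1 = s z.2})
      {z : 𝒳 × 𝒳 | s z.2 < s z.1} := by
    rw [Set.disjoint_left]
    intro z hz1 hz2
    simp only [Set.mem_union, Set.mem_setOf_eq] at hz1 hz2
    rcases hz1 with h | h
    · exact absurd hz2 (lt_asymm h)
    · exact absurd hz2 (not_lt.2 (le_of_eq h))
  have huniv : ({z : 𝒳 × 𝒳 | s z.1 < s z.2} ∪ {z : 𝒳 × 𝒳 | s z.1 = s z.2}) ∪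
      {z : 𝒳 × 𝒳 | s z.2 < s z.1} = Set.univ := by
    ext z
    simp only [Set.mem_union, Set.mem_setOf_eq, Set.mem_univ, iff_true]
    rcases lt_trichotomy (s z.1) (s z.2) with h | h | h
    · exact Or.inl (Or.inl h)
    · exact Or.inl (Or.inr h)
    · exact Or.inr h
  have hsum : (μ.prod ν) {z : 𝒳 × 𝒳 | s z.1 < s z.2} + (μ.prod ν) {z : 𝒳 × 𝒳 | s z.1 = s z.2}
      + (μ.prod ν) {z : 𝒳 × 𝒳 | s z.2 < s z.1} = 1 := by
    rw [← measure_union hdisjAB hBset, ← measure_union hdisjC hCset, huniv, measure_univ]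
  have habc : a + b + c = 1 := by
    rw [ha_def, hb_def, hc_def,
      ← ENNReal.toReal_add (measure_ne_top _ _) (measure_ne_top _ _),
      ← ENNReal.toReal_add (ENNReal.add_ne_top.2 ⟨measure_ne_top _ _, measure_ne_top _ _⟩)
        (measure_ne_top _ _), hsum, ENNReal.toReal_one]
  have hauc : auc μ ν s = c + (1 / 2) * b := by
    simp only [auc]
    rfl
  have h1auc : 1 - auc μ ν s = a + (1 / 2) * b := by
    rw [hauc]; linarith
  ------------------------------------------------------------------
  -- Part 2: the total-variation inequality
  ------------------------------------------------------------------
  set L := lam.prod lam with hL_def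
  set w : 𝒳 × 𝒳 → ℝ := fun z => p z.1 * q z.2 with hw_def
  set w' : 𝒳 × 𝒳 → ℝ := fun z => p z.2 * q z.1 with hw'_def
  have hw_nonneg : ∀ z, 0 ≤ w z := fun z => mul_nonneg (hp0 z.1).le (hq0 z.2).le
  have hw'_nonneg : ∀ z, 0 ≤ w' z := fun z => mul_nonneg (hp0 z.2).le (hq0 z.1).le
  have hwmeas : Measurable w := (hpm.comp measurable_fst).mul (hqm.comp measurable_snd)
  have hw'meas : Measurable w' := (hpm.comp measurable_snd).mul (hqm.comp measurable_fst)
  have hWint : Integrable w L := hp_int.mul_prod hq_int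
  have hW'int : Integrable w' L := by
    have h := hq_int.mul_prod hp_int
    refine h.congr (Filter.Eventually.of_forall fun z => ?_)
    simp [hw'_def, mul_comm]
  have hprod : μ.prod ν = L.withDensity (fun z => ENNReal.ofReal (w z)) := by
    refine Measure.prod_eq fun u v hu hv => ?_
    rw [withDensity_apply _ (hu.prod hv), hL_def, ← Measure.prod_restrict]
    calc ∫⁻ z, ENNReal.ofReal (w z) ∂((lam.restrict u).prod (lam.restrict v))
        = ∫⁻ z, ENNReal.ofReal (p z.1) * ENNReal.ofReal (q z.2)
            ∂((lam.restrict u).prod (lam.restrict v)) := by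
          refine lintegral_congr fun z => ?_
          rw [hw_def]
          exact ENNReal.ofReal_mul (hp0 z.1).le
      _ = (∫⁻ x, ENNReal.ofReal (p x) ∂lam.restrict u)
            * ∫⁻ y, ENNReal.ofReal (q y) ∂lam.restrict v :=
          lintegral_prod_mul (hpm.ennreal_ofReal.aemeasurable) (hqm.ennreal_ofReal.aemeasurable)
      _ = μ u * ν v := by
          rw [hμ_def, hν_def, densMeasure, densMeasure, withDensity_apply _ hu,
            withDensity_apply _ hv]
  have hmeasE : ∀ E : Set (𝒳 × 𝒳), MeasurableSet E →
      ((μ.prod ν) E).toReal = ∫ z in E, w z ∂L := by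
    intro E hE
    rw [hprod, withDensity_apply _ hE,
      ← ofReal_integral_eq_lintegral_ofReal (hWint.restrict)
        (Filter.Eventually.of_forall hw_nonneg)]
    exact ENNReal.toReal_ofReal (setIntegral_nonneg hE fun x _ => hw_nonneg x)
  -- swap invariance
  have hswapME : MeasurableEmbedding (Prod.swap : 𝒳 × 𝒳 → 𝒳 × 𝒳) :=
    (MeasurableEquiv.prodComm : 𝒳 × 𝒳 ≃ᵐ 𝒳 × 𝒳).measurableEmbedding
  have hswapMP : MeasurePreserving (Prod.swap : 𝒳 × 𝒳 → 𝒳 × 𝒳) L L :=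
    Measure.measurePreserving_swap
  have hswap_int : ∀ g : 𝒳 × 𝒳 → ℝ, ∫ z, g (Prod.swap z) ∂L = ∫ z, g z ∂L := fun g =>
    hswapMP.integral_comp hswapME g
  -- integrabilities of truncated integrands
  have hintC : Integrable (fun z => if s z.2 < s z.1 then w z else 0) L := by
    refine hWint.mono' (Measurable.aestronglyMeasurable ?_) (ae_of_all _ fun z => ?_)
    · exact Measurable.ite hCset hwmeas measurable_const
    · rw [Real.norm_eq_abs]
      split
      · rw [abs_of_nonneg (hw_nonneg z)]
      · rw [abs_zero]; exact hw_nonneg z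
  have hintA : Integrable (fun z => if s z.1 < s z.2 then w z else 0) L := by
    refine hWint.mono' (Measurable.aestronglyMeasurable ?_) (ae_of_all _ fun z => ?_)
    · exact Measurable.ite hAset hwmeas measurable_const
    · rw [Real.norm_eq_abs]
      split
      · rw [abs_of_nonneg (hw_nonneg z)]
      · rw [abs_zero]; exact hw_nonneg z
  have hintA' : Integrable (fun z => if s z.1 < s z.2 then w' z else 0) L := by
    refine hW'int.mono' (Measurable.aestronglyMeasurable ?_) (ae_of_all _ fun z => ?_)
    · exact Measurable.ite hAset hw'meas measurable_const
    · rw [Real.norm_eq_abs]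
      split
      · rw [abs_of_nonneg (hw'_nonneg z)]
      · rw [abs_zero]; exact hw'_nonneg z
  have hintC' : Integrable (fun z => if s z.2 < s z.1 then w' z else 0) L := by
    refine hW'int.mono' (Measurable.aestronglyMeasurable ?_) (ae_of_all _ fun z => ?_)
    · exact Measurable.ite hCset hw'meas measurable_const
    · rw [Real.norm_eq_abs]
      split
      · rw [abs_of_nonneg (hw'_nonneg z)]
      · rw [abs_zero]; exact hw'_nonneg z
  have e1 : c = ∫ z, (if s z.2 < s z.1 then w z else 0) ∂L := by
    rw [hc_def, hmeasE _ hCset, ← integral_indicator hCset]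
    refine integral_congr_ae (ae_of_all _ fun z => ?_)
    by_cases h : s z.2 < s z.1 <;> simp [Set.indicator_apply, h]
  have e2 : a = ∫ z, (if s z.1 < s z.2 then w z else 0) ∂L := by
    rw [ha_def, hmeasE _ hAset, ← integral_indicator hAset]
    refine integral_congr_ae (ae_of_all _ fun z => ?_)
    by_cases h : s z.1 < s z.2 <;> simp [Set.indicator_apply, h]
  have e3 : ∫ z, (if s z.1 < s z.2 then w' z else 0) ∂L
      = ∫ z, (if s z.2 < s z.1 then w z else 0) ∂L :=
    hswap_int (fun z => if s z.2 < s z.1 then w z else 0)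
  have e4 : ∫ z, (if s z.2 < s z.1 then w' z else 0) ∂L
      = ∫ z, (if s z.1 < s z.2 then w z else 0) ∂L :=
    hswap_int (fun z => if s z.1 < s z.2 then w z else 0)
  have hpoint : ∀ z : 𝒳 × 𝒳,
      (if s z.2 < s z.1 then w z else 0) - (if s z.1 < s z.2 then w z else 0)
      + ((if s z.1 < s z.2 then w' z else 0) - (if s z.2 < s z.1 then w' z else 0))
      = |w z - w' z| := by
    intro z
    have hlt : s z.1 < s z.2 ↔ w z < w' z := div_lt_div_iff₀ (hq0 z.1) (hq0 z.2)
    have hlt' : s z.2 < s z.1 ↔ w' z < w z := div_lt_div_iff₀ (hq0 z.2) (hq0 z.1)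
    have heq : s z.1 = s z.2 ↔ w z = w' z :=
      div_eq_div_iff (ne_of_gt (hq0 z.1)) (ne_of_gt (hq0 z.2))
    rcases lt_trichotomy (s z.1) (s z.2) with h | h | h
    · rw [if_neg (asymm h), if_pos h, if_pos h, if_neg (asymm h),
        abs_of_neg (sub_neg.mpr (hlt.1 h))]
      ring
    · rw [if_neg (not_lt.2 h.le), if_neg (not_lt.2 h.ge), if_neg (not_lt.2 h.ge),
        if_neg (not_lt.2 h.le), heq.1 h]
      simp
    · rw [if_pos h, if_neg (asymm h), if_neg (asymm h), if_pos h,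
        abs_of_pos (sub_pos.2 (hlt'.1 h))]
      ring
  have h2ca : 2 * (c - a) = ∫ z, |w z - w' z| ∂L := by
    have comb : ∫ z, ((if s z.2 < s z.1 then w z else 0) - (if s z.1 < s z.2 then w z else 0)
        + ((if s z.1 < s z.2 then w' z else 0) - (if s z.2 < s z.1 then w' z else 0))) ∂L
        = (c - a) + (c - a) := by
      have hsub1 : Integrable (fun z =>
          (if s z.2 < s z.1 then w z else 0) - (if s z.1 < s z.2 then w z else 0)) L :=
        hintC.sub hintA
      have hsub2 : Integrable (fun z =>
          (if s z.1 < s z.2 then w' z else 0) - (if s z.2 < s z.1 then w' z else 0)) L :=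
        hintA'.sub hintC'
      rw [integral_add hsub1 hsub2, integral_sub hintC hintA,
        integral_sub hintA' hintC', e3, e4, ← e1, ← e2]
    calc 2 * (c - a) = (c - a) + (c - a) := by ring
      _ = _ := comb.symm
      _ = ∫ z, |w z - w' z| ∂L := integral_congr_ae (ae_of_all _ fun z => hpoint z)
  have hfub : ∫ z, |w z - w' z| ∂L = ∫ x, (∫ y, |w (x, y) - w' (x, y)| ∂lam) ∂lam :=
    integral_prod _ ((hWint.sub hW'int).abs)
  have hinner : ∀ x, |p x - q x| ≤ ∫ y, |w (x, y) - w' (x, y)| ∂lam := by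
    intro x
    have hI1 : Integrable (fun y => p x * q y) lam := hq_int.const_mul _
    have hI2 : Integrable (fun y => p y * q x) lam := hp_int.mul_const _
    have hval : ∫ y, (p x * q y - p y * q x) ∂lam = p x - q x := by
      rw [integral_sub hI1 hI2, integral_const_mul, integral_mul_const, hq1, hp1, mul_one,
        one_mul]
    calc |p x - q x| = |∫ y, (p x * q y - p y * q x) ∂lam| := by rw [hval]
      _ ≤ ∫ y, |p x * q y - p y * q x| ∂lam := by
          simpa [Real.norm_eq_abs] using
            norm_integral_le_integral_norm (μ := lam) (fun y => p x * q y - p y * q x)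
  have hmono : ∫ x, |p x - q x| ∂lam ≤ ∫ x, (∫ y, |w (x, y) - w' (x, y)| ∂lam) ∂lam :=
    integral_mono ((hp_int.sub hq_int).abs) ((hWint.sub hW'int).abs.integral_prod_left) hinner
  have htv_le : tvDist lam p q ≤ c - a := by
    have : tvDist lam p q = (1 / 2) * ∫ x, |p x - q x| ∂lam := rfl
    rw [this]
    linarith [h2ca, hfub, hmono]
  have hineq : 1 - auc μ ν s ≤ 1 / 2 - tvDist lam p q / 2 := by
    rw [h1auc]
    linarith [htv_le, habc]
  ------------------------------------------------------------------
  -- Part 1: the limit of the expectations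
  ------------------------------------------------------------------
  -- laws of pairs and triples
  have hXξlaw : Measure.map (fun ω => (Xt ω, ξ ω)) P = ν.prod Ulaw := by
    have h := (indepFun_iff_map_prod_eq_prod_map_map hXtm.aemeasurable hξm.aemeasurable).1 hindep2
    rw [hXtlaw, hξlaw] at h
    exact h
  have hXiXt : ∀ i, IndepFun (X i) Xt P := by
    intro i
    have h1 : IndepFun (X i) (fun ω => (Xt ω, ξ ω)) P :=
      hindep.comp (measurable_pi_apply i) measurable_id
    exact h1.comp measurable_id measurable_fst
  have hpairlaw : ∀ i, Measure.map (fun ω => (X i ω, Xt ω)) P = μ.prod ν := by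
    intro i
    have h := (indepFun_iff_map_prod_eq_prod_map_map (hXm i).aemeasurable
      hXtm.aemeasurable).1 (hXiXt i)
    rw [hXlaw i, hXtlaw] at h
    exact h
  have htriple : ∀ i, Measure.map (fun ω => (X i ω, (Xt ω, ξ ω))) P = μ.prod (ν.prod Ulaw) := by
    intro i
    have h1 : IndepFun (X i) (fun ω => (Xt ω, ξ ω)) P :=
      hindep.comp (measurable_pi_apply i) measurable_id
    have h := (indepFun_iff_map_prod_eq_prod_map_map (hXm i).aemeasurable
      (hXtm.prodMk hξm).aemeasurable).1 h1
    rw [hXlaw i, hXξlaw] at h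
    exact h
  have hbig : ∀ i, Measure.map (fun ω => ((X i ω, Xt ω), ξ ω)) P = (μ.prod ν).prod Ulaw := by
    intro i
    have hcomp : (fun ω => ((X i ω, Xt ω), ξ ω))
        = (MeasurableEquiv.prodAssoc.symm : 𝒳 × 𝒳 × ℝ ≃ᵐ (𝒳 × 𝒳) × ℝ)
          ∘ (fun ω => (X i ω, (Xt ω, ξ ω))) := rfl
    rw [hcomp, ← Measure.map_map (MeasurableEquiv.prodAssoc.symm.measurable)
      ((hXm i).prodMk (hXtm.prodMk hξm)), htriple i,
      ((measurePreserving_prodAssoc μ ν Ulaw).symm _).map_eq]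
  have hpairξ : ∀ i, IndepFun (fun ω => (X i ω, Xt ω)) ξ P := by
    intro i
    refine (indepFun_iff_map_prod_eq_prod_map_map ((hXm i).prodMk hXtm).aemeasurable
      hξm.aemeasurable).2 ?_
    rw [hpairlaw i, hξlaw]
    exact hbig i
  -- facts about ξ
  have hξint : Integrable ξ P := by
    have h : Integrable id (Measure.map ξ P) := by
      rw [hξlaw]
      exact continuous_id.integrableOn_Icc
    exact (integrable_map_measure aestronglyMeasurable_id hξm.aemeasurable).1 h
  have hξ_integral : ∫ ω, ξ ω ∂P = 1 / 2 := by
    have h1 : ∫ ω, ξ ω ∂P = ∫ x, x ∂(Measure.map ξ P) :=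
      (integral_map hξm.aemeasurable aestronglyMeasurable_id).symm
    rw [h1, hξlaw, hU_def]
    have : ∫ x in Set.Icc (0 : ℝ) 1, x = (1 : ℝ) / 2 := by
      rw [MeasureTheory.integral_Icc_eq_integral_Ioc,
        ← intervalIntegral.integral_of_le (zero_le_one (α := ℝ))]
      simp [integral_id]
    exact this
  have hξae : ∀ᵐ ω ∂P, ‖ξ ω‖ ≤ 1 := by
    have h0 : P (ξ ⁻¹' (Set.Icc (0 : ℝ) 1)ᶜ) = 0 := by
      rw [← Measure.map_apply hξm measurableSet_Icc.compl, hξlaw,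
        Measure.restrict_apply measurableSet_Icc.compl]
      simp
    have h1 : ∀ᵐ ω ∂P, ξ ω ∈ Set.Icc (0 : ℝ) 1 := by
      rw [ae_iff]
      convert h0 using 2
      rfl
    filter_upwards [h1] with ω hω
    rw [Real.norm_eq_abs, abs_of_nonneg hω.1]
    exact hω.2
  -- expectations of indicator terms
  have hm_lt_set : ∀ i, MeasurableSet {ω | s (X i ω) < s (Xt ω)} := fun i =>
    measurableSet_lt (hsm.comp (hXm i)) (hsm.comp hXtm)
  have hm_eq_set : ∀ i, MeasurableSet {ω | s (X i ω) = s (Xt ω)} := fun i =>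
    measurableSet_eq_fun (hsm.comp (hXm i)) (hsm.comp hXtm)
  have hint_lt : ∀ i, Integrable (fun ω => if s (X i ω) < s (Xt ω) then (1 : ℝ) else 0) P := by
    intro i
    refine ((integrable_const (1 : ℝ)).indicator (hm_lt_set i)).congr
      (ae_of_all _ fun ω => ?_)
    by_cases h : s (X i ω) < s (Xt ω) <;> simp [Set.indicator_apply, h]
  have hint_eq : ∀ i, Integrable (fun ω => if s (X i ω) = s (Xt ω) then (1 : ℝ) else 0) P := by
    intro i
    refine ((integrable_const (1 : ℝ)).indicator (hm_eq_set i)).congr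
      (ae_of_all _ fun ω => ?_)
    by_cases h : s (X i ω) = s (Xt ω) <;> simp [Set.indicator_apply, h]
  have h_lt : ∀ i, ∫ ω, (if s (X i ω) < s (Xt ω) then (1 : ℝ) else 0) ∂P = a := by
    intro i
    have h : ∫ ω, (if s (X i ω) < s (Xt ω) then (1 : ℝ) else 0) ∂P
        = ∫ z, Set.indicator {z : 𝒳 × 𝒳 | s z.1 < s z.2} 1 z
            ∂(Measure.map (fun ω => (X i ω, Xt ω)) P) := by
      rw [integral_map ((hXm i).prodMk hXtm).aemeasurable
        ((measurable_one.indicator hAset).aestronglyMeasurable)]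
      refine integral_congr_ae (ae_of_all _ fun ω => ?_)
      by_cases h : s (X i ω) < s (Xt ω) <;> simp [Set.indicator_apply, h]
    rw [h, hpairlaw i, integral_indicator_one hAset, ha_def, measureReal_def]
  have h_eq : ∀ i, ∫ ω, (if s (X i ω) = s (Xt ω) then (1 : ℝ) else 0) ∂P = b := by
    intro i
    have h : ∫ ω, (if s (X i ω) = s (Xt ω) then (1 : ℝ) else 0) ∂P
        = ∫ z, Set.indicator {z : 𝒳 × 𝒳 | s z.1 = s z.2} 1 z
            ∂(Measure.map (fun ω => (X i ω, Xt ω)) P) := by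
      rw [integral_map ((hXm i).prodMk hXtm).aemeasurable
        ((measurable_one.indicator hBset).aestronglyMeasurable)]
      refine integral_congr_ae (ae_of_all _ fun ω => ?_)
      by_cases h : s (X i ω) = s (Xt ω) <;> simp [Set.indicator_apply, h]
    rw [h, hpairlaw i, integral_indicator_one hBset, hb_def, measureReal_def]
  have hφm : Measurable (fun z : 𝒳 × 𝒳 => if s z.1 = s z.2 then (1 : ℝ) else 0) :=
    Measurable.ite hBset measurable_const measurable_const
  have h_mul : ∀ i, ∫ ω, ξ ω * (if s (X i ω) = s (Xt ω) then (1 : ℝ) else 0) ∂P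
      = (1 / 2) * b := by
    intro i
    have hIF : IndepFun ξ (fun ω => if s (X i ω) = s (Xt ω) then (1 : ℝ) else 0) P :=
      (hpairξ i).symm.comp measurable_id hφm
    rw [hIF.integral_fun_mul_eq_mul_integral hξm.aestronglyMeasurable
      ((hφm.comp ((hXm i).prodMk hXtm)).aestronglyMeasurable), hξ_integral, h_eq i]
  have hint_mul : ∀ i, Integrable (fun ω => ξ ω *
      (if s (X i ω) = s (Xt ω) then (1 : ℝ) else 0)) P := fun i =>
    (hint_eq i).bdd_mul hξm.aestronglyMeasurable hξae
  -- the expectation of U_m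
  have hkey : ∀ m : ℕ, (∫ ω, (1 / (m + 1 : ℝ)) *
        ((∑ i ∈ Finset.range m, if s (X i ω) < s (Xt ω) then (1 : ℝ) else 0) +
          ξ ω * (1 + ∑ i ∈ Finset.range m, if s (X i ω) = s (Xt ω) then (1 : ℝ) else 0)) ∂P)
      = (1 / (m + 1 : ℝ)) * (m * a + (1 / 2) * (1 + m * b)) := by
    intro m
    have hSint : Integrable (fun ω => ∑ i ∈ Finset.range m,
        if s (X i ω) < s (Xt ω) then (1 : ℝ) else 0) P :=
      integrable_finset_sum _ (fun i _ => hint_lt i)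
    have hTint : Integrable (fun ω => ∑ i ∈ Finset.range m,
        ξ ω * (if s (X i ω) = s (Xt ω) then (1 : ℝ) else 0)) P :=
      integrable_finset_sum _ (fun i _ => hint_mul i)
    have hre : ∀ ω, (∑ i ∈ Finset.range m, if s (X i ω) < s (Xt ω) then (1 : ℝ) else 0) +
        ξ ω * (1 + ∑ i ∈ Finset.range m, if s (X i ω) = s (Xt ω) then (1 : ℝ) else 0)
        = (∑ i ∈ Finset.range m, if s (X i ω) < s (Xt ω) then (1 : ℝ) else 0) + (ξ ω +
          ∑ i ∈ Finset.range m, ξ ω * (if s (X i ω) = s (Xt ω) then (1 : ℝ) else 0)) := by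
      intro ω
      rw [mul_add, mul_one, Finset.mul_sum]
    have hS : ∫ ω, (∑ i ∈ Finset.range m,
        if s (X i ω) < s (Xt ω) then (1 : ℝ) else 0) ∂P = m * a := by
      rw [integral_finset_sum _ (fun i _ => hint_lt i),
        Finset.sum_congr rfl (fun i _ => h_lt i), Finset.sum_const, Finset.card_range,
        nsmul_eq_mul]
    have hT : ∫ ω, (ξ ω + ∑ i ∈ Finset.range m,
        ξ ω * (if s (X i ω) = s (Xt ω) then (1 : ℝ) else 0)) ∂P
        = 1 / 2 + m * ((1 / 2) * b) := by
      rw [integral_add hξint hTint, integral_finset_sum _ (fun i _ => hint_mul i),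
        hξ_integral, Finset.sum_congr rfl (fun i _ => h_mul i), Finset.sum_const,
        Finset.card_range, nsmul_eq_mul]
    have hξT : Integrable (fun ω => ξ ω + ∑ i ∈ Finset.range m,
        ξ ω * (if s (X i ω) = s (Xt ω) then (1 : ℝ) else 0)) P := hξint.add hTint
    simp_rw [hre]
    rw [integral_const_mul, integral_add hSint hξT, hS, hT]
    ring
  -- the limit
  have h0 : Tendsto (fun m : ℕ => 1 / ((m : ℝ) + 1)) atTop (𝓝 0) :=
    tendsto_one_div_add_atTop_nhds_zero_nat
  have hlim : Tendsto (fun m : ℕ => (1 / (m + 1 : ℝ)) * (m * a + (1 / 2) * (1 + m * b)))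
      atTop (𝓝 (a + (1 / 2) * b)) := by
    have hfe : ∀ m : ℕ, (1 / (m + 1 : ℝ)) * (m * a + (1 / 2) * (1 + m * b))
        = (a + (1 / 2) * b) * (1 - 1 / ((m : ℝ) + 1)) + (1 / 2) * (1 / ((m : ℝ) + 1)) := by
      intro m
      have hm : (m : ℝ) + 1 ≠ 0 := by positivity
      field_simp
      ring
    refine Tendsto.congr (fun m => (hfe m).symm) ?_
    have h : Tendsto (fun m : ℕ => (a + (1 / 2) * b) * (1 - 1 / ((m : ℝ) + 1))
        + (1 / 2) * (1 / ((m : ℝ) + 1))) atTop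
        (𝓝 ((a + (1 / 2) * b) * (1 - 0) + (1 / 2) * 0)) :=
      (tendsto_const_nhds.mul (tendsto_const_nhds.sub h0)).add
        (tendsto_const_nhds.mul h0)
    simpa using h
  refine ⟨?_, hineq, ?_⟩
  · rw [h1auc]
    exact Tendsto.congr (fun m => (hkey m).symm) hlim
  · intro hne
    have habs_int : Integrable (fun x => |p x - q x|) lam := (hp_int.sub hq_int).abs
    have hne0 : ∫ x, |p x - q x| ∂lam ≠ 0 := by
      intro h0
      have h := (integral_eq_zero_iff_of_nonneg (fun x => abs_nonneg _) habs_int).1 h0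
      apply hne
      filter_upwards [h] with x hx
      exact sub_eq_zero.1 (abs_eq_zero.1 hx)
    have hpos : 0 < ∫ x, |p x - q x| ∂lam :=
      lt_of_le_of_ne (integral_nonneg fun x => abs_nonneg _) (Ne.symm hne0)
    have htv_pos : 0 < tvDist lam p q := by
      have : tvDist lam p q = (1 / 2) * ∫ x, |p x - q x| ∂lam := rfl
      rw [this]
      linarith
    linarith [hineq]
end

section
/- Let p and q be probability densities on 𝒳 with p, q > 0 everywhere, and let s : 𝒳 → ℝ be measurable. Define a_s(x, x̃) := 1{s(x) > s(x̃)} − 1{s(x̃) > s(x)} and W(x, x̃) := p(x)q(x̃) − p(x̃)q(x). Then AUC(s) = 1/2 + (1/4)·∫∫ a_s(x, x̃) · W(x, x̃) dx dx̃. -/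
open MeasureTheory
open scoped ENNReal

section Aux

variable {𝒳 : Type*} [MeasurableSpace 𝒳] {lam : Measure 𝒳} [SigmaFinite lam]
  {p q : 𝒳 → ℝ}

lemma densMeasure_finite (hpm : Measurable p) (hp0 : ∀ x, 0 ≤ p x) (hpi : Integrable p lam) :
    IsFiniteMeasure (densMeasure lam p) := by
  constructor
  rw [densMeasure, withDensity_apply _ MeasurableSet.univ, Measure.restrict_univ,
    ← ofReal_integral_eq_lintegral_ofReal hpi (Filter.Eventually.of_forall hp0)]
  exact ENNReal.ofReal_lt_top

lemma densMeasure_prod (hpm : Measurable p) (hqm : Measurable q)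
    (hp0 : ∀ x, 0 ≤ p x) (hq0 : ∀ x, 0 ≤ q x)
    (hpi : Integrable p lam) (hqi : Integrable q lam) :
    (densMeasure lam p).prod (densMeasure lam q) =
      (lam.prod lam).withDensity
        (fun z => ENNReal.ofReal (p z.1) * ENNReal.ofReal (q z.2)) := by
  haveI := densMeasure_finite hpm hp0 hpi
  haveI := densMeasure_finite hqm hq0 hqi
  refine Measure.prod_eq fun s t hs ht => ?_
  rw [withDensity_apply _ (hs.prod ht), ← Measure.prod_restrict,
    lintegral_prod_mul (hpm.ennreal_ofReal.aemeasurable) (hqm.ennreal_ofReal.aemeasurable),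
    densMeasure, densMeasure, withDensity_apply _ hs, withDensity_apply _ ht]

lemma densMeasure_prod_apply (hpm : Measurable p) (hqm : Measurable q)
    (hp0 : ∀ x, 0 ≤ p x) (hq0 : ∀ x, 0 ≤ q x)
    (hpi : Integrable p lam) (hqi : Integrable q lam)
    {S : Set (𝒳 × 𝒳)} (hS : MeasurableSet S) :
    ((densMeasure lam p).prod (densMeasure lam q)) S =
      ENNReal.ofReal (∫ z in S, p z.1 * q z.2 ∂(lam.prod lam)) := by
  rw [densMeasure_prod hpm hqm hp0 hq0 hpi hqi, withDensity_apply _ hS]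
  have h1 : ∀ z : 𝒳 × 𝒳, ENNReal.ofReal (p z.1) * ENNReal.ofReal (q z.2) =
      ENNReal.ofReal (p z.1 * q z.2) := fun z =>
    (ENNReal.ofReal_mul (hp0 z.1)).symm
  simp_rw [h1]
  rw [← ofReal_integral_eq_lintegral_ofReal ((hpi.mul_prod hqi).integrableOn)
    (Filter.Eventually.of_forall fun z => mul_nonneg (hp0 z.1) (hq0 z.2))]

end Aux


/-- For strictly positive probability densities `p, q` and a measurable score `s`,
with `a_s(x,x̃) := 1{s(x) > s(x̃)} − 1{s(x̃) > s(x)}` and `W(x,x̃) := p(x)q(x̃) − p(x̃)q(x)`,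
`AUC(s) = 1/2 + (1/4) ∫∫ a_s(x,x̃) W(x,x̃) dx dx̃`. -/
theorem stmt6 {𝒳 : Type*} [MeasurableSpace 𝒳] (lam : Measure 𝒳) [SigmaFinite lam]
    (p q : 𝒳 → ℝ) (hpm : Measurable p) (hqm : Measurable q)
    (hp0 : ∀ x, 0 < p x) (hq0 : ∀ x, 0 < q x)
    (hp1 : ∫ x, p x ∂lam = 1) (hq1 : ∫ x, q x ∂lam = 1)
    (s : 𝒳 → ℝ) (hs : Measurable s) :
    auc (densMeasure lam p) (densMeasure lam q) s =
      1 / 2 + (1 / 4) * ∫ z : 𝒳 × 𝒳,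
        ((if s z.2 < s z.1 then (1 : ℝ) else 0) - (if s z.1 < s z.2 then (1 : ℝ) else 0)) *
          (p z.1 * q z.2 - p z.2 * q z.1) ∂(lam.prod lam) := by
  have hp0' : ∀ x, 0 ≤ p x := fun x => (hp0 x).le
  have hq0' : ∀ x, 0 ≤ q x := fun x => (hq0 x).le
  have hpi : Integrable p lam := by
    by_contra h; rw [integral_undef h] at hp1; norm_num at hp1
  have hqi : Integrable q lam := by
    by_contra h; rw [integral_undef h] at hq1; norm_num at hq1
  set f : 𝒳 × 𝒳 → ℝ := fun z => p z.1 * q z.2 with hf_def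
  set g : 𝒳 × 𝒳 → ℝ := fun z => p z.2 * q z.1 with hg_def
  have hfi : Integrable f (lam.prod lam) := hpi.mul_prod hqi
  have hgi : Integrable g (lam.prod lam) := by
    have := hqi.mul_prod hpi
    simpa [hg_def, mul_comm] using this
  have hf0 : ∀ z, 0 ≤ f z := fun z => mul_nonneg (hp0' z.1) (hq0' z.2)
  set A : Set (𝒳 × 𝒳) := {z | s z.2 < s z.1} with hA_def
  set B : Set (𝒳 × 𝒳) := {z | s z.1 < s z.2} with hB_def
  set E : Set (𝒳 × 𝒳) := {z | s z.1 = s z.2} with hE_def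
  have hAm : MeasurableSet A :=
    measurableSet_lt (hs.comp measurable_snd) (hs.comp measurable_fst)
  have hBm : MeasurableSet B :=
    measurableSet_lt (hs.comp measurable_fst) (hs.comp measurable_snd)
  have hEm : MeasurableSet E :=
    measurableSet_eq_fun (hs.comp measurable_fst) (hs.comp measurable_snd)
  set a : ℝ := ∫ z in A, f z ∂(lam.prod lam) with ha_def
  set b : ℝ := ∫ z in B, f z ∂(lam.prod lam) with hb_def
  set e : ℝ := ∫ z in E, f z ∂(lam.prod lam) with he_def
  have ha0 : 0 ≤ a := setIntegral_nonneg hAm fun z _ => hf0 z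
  have he0 : 0 ≤ e := setIntegral_nonneg hEm fun z _ => hf0 z
  -- AUC = a + e/2
  have hauc : auc (densMeasure lam p) (densMeasure lam q) s = a + (1 / 2) * e := by
    rw [auc, densMeasure_prod_apply hpm hqm hp0' hq0' hpi hqi hAm,
      densMeasure_prod_apply hpm hqm hp0' hq0' hpi hqi hEm,
      ENNReal.toReal_ofReal ha0, ENNReal.toReal_ofReal he0]
  -- total mass : a + b + e = 1
  have htot : a + b + e = 1 := by
    have hunion : A ∪ (B ∪ E) = Set.univ := by
      ext z
      simp only [hA_def, hB_def, hE_def, Set.mem_union, Set.mem_setOf_eq, Set.mem_univ,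
        iff_true]
      rcases lt_trichotomy (s z.2) (s z.1) with h | h | h
      · exact Or.inl h
      · exact Or.inr (Or.inr h.symm)
      · exact Or.inr (Or.inl h)
    have hdBE : Disjoint B E := by
      rw [Set.disjoint_left]; intro z hz1 hz2; exact absurd hz2 (ne_of_lt hz1)
    have hdABE : Disjoint A (B ∪ E) := by
      rw [Set.disjoint_left]; intro z hz1 hz2
      have hz1' : s z.2 < s z.1 := hz1
      rcases hz2 with h | h
      · exact lt_asymm hz1' h
      · exact absurd h.symm (ne_of_lt hz1)
    have h1 : ∫ z, f z ∂(lam.prod lam) = 1 := by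
      rw [hf_def, integral_prod_mul, hp1, hq1, one_mul]
    calc a + b + e = a + (b + e) := by ring
      _ = ∫ z in A ∪ (B ∪ E), f z ∂(lam.prod lam) := by
          rw [setIntegral_union hdABE (hBm.union hEm) hfi.integrableOn hfi.integrableOn,
            setIntegral_union hdBE hEm hfi.integrableOn hfi.integrableOn]
      _ = 1 := by rw [hunion, setIntegral_univ, h1]
  -- the double integral equals 2a - 2b
  have hI : (∫ z : 𝒳 × 𝒳,
      ((if s z.2 < s z.1 then (1 : ℝ) else 0) - (if s z.1 < s z.2 then (1 : ℝ) else 0)) *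
        (p z.1 * q z.2 - p z.2 * q z.1) ∂(lam.prod lam)) = 2 * a - 2 * b := by
    have hpt : ∀ z : 𝒳 × 𝒳,
        ((if s z.2 < s z.1 then (1 : ℝ) else 0) - (if s z.1 < s z.2 then (1 : ℝ) else 0)) *
          (p z.1 * q z.2 - p z.2 * q z.1) =
        A.indicator (fun z => f z - g z) z - B.indicator (fun z => f z - g z) z := by
      intro z
      by_cases h1 : s z.2 < s z.1
      · have h2 : ¬ s z.1 < s z.2 := lt_asymm h1
        simp [Set.indicator_apply, hA_def, hB_def, h1, h2, hf_def, hg_def]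
      · by_cases h2 : s z.1 < s z.2
        · simp [Set.indicator_apply, hA_def, hB_def, h1, h2, hf_def, hg_def]
        · simp [Set.indicator_apply, hA_def, hB_def, h1, h2]
    have hswapA : ∫ z in A, g z ∂(lam.prod lam) = b := by
      have h1 : ∫ z, A.indicator g z ∂(lam.prod lam) =
          ∫ z, A.indicator g (Prod.swap z) ∂(lam.prod lam) :=
        (integral_prod_swap (A.indicator g)).symm
      have h2 : ∀ z : 𝒳 × 𝒳, A.indicator g (Prod.swap z) = B.indicator f z := by
        intro z
        simp only [Set.indicator_apply, hA_def, hB_def, Set.mem_setOf_eq, Prod.snd_swap,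
          Prod.fst_swap, hf_def, hg_def, Prod.fst, Prod.snd]
      rw [← integral_indicator hAm, h1]
      simp_rw [h2]
      rw [integral_indicator hBm]
    have hswapB : ∫ z in B, g z ∂(lam.prod lam) = a := by
      have h1 : ∫ z, B.indicator g z ∂(lam.prod lam) =
          ∫ z, B.indicator g (Prod.swap z) ∂(lam.prod lam) :=
        (integral_prod_swap (B.indicator g)).symm
      have h2 : ∀ z : 𝒳 × 𝒳, B.indicator g (Prod.swap z) = A.indicator f z := by
        intro z
        simp only [Set.indicator_apply, hA_def, hB_def, Set.mem_setOf_eq, Prod.snd_swap,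
          Prod.fst_swap, hf_def, hg_def]
      rw [← integral_indicator hBm, h1]
      simp_rw [h2]
      rw [integral_indicator hAm]
    have hfg : Integrable (fun z => f z - g z) (lam.prod lam) := hfi.sub hgi
    simp_rw [hpt]
    rw [integral_sub (hfg.indicator hAm) (hfg.indicator hBm),
      integral_indicator hAm, integral_indicator hBm,
      integral_sub hfi.integrableOn hgi.integrableOn,
      integral_sub hfi.integrableOn hgi.integrableOn,
      hswapA, hswapB, ← ha_def, ← hb_def]
    ring
  rw [hauc, hI]
  linarith
end

section
/- Let p and q be probability densities on 𝒳 with p, q > 0 everywhere and r(x) := p(x)/q(x). Then AUC(r) = 1/2 + (1/4)·∫∫ |p(x)q(x̃) − p(x̃)q(x)| dx dx̃. -/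
open MeasureTheory
open scoped ENNReal

lemma auc_key {α : Type*} [MeasurableSpace α] (m : Measure α)
    (e : α → α) (hme : MeasurePreserving e m m) (hemb : MeasurableEmbedding e)
    (hinv : ∀ z, e (e z) = z)
    (F G : α → ℝ) (hFm : Measurable F) (hGm : Measurable G)
    (hFi : Integrable F m) (hGi : Integrable G m)
    (hG : ∀ z, G z = F (e z))
    (htot : ∫ z, F z ∂m = 1) :
    (∫ z in {z | G z < F z}, F z ∂m) + (1/2) * (∫ z in {z | F z = G z}, F z ∂m)
      = 1/2 + (1/4) * ∫ z, |F z - G z| ∂m := by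
  have hAm : MeasurableSet {z | G z < F z} := measurableSet_lt hGm hFm
  have hBm : MeasurableSet {z | F z = G z} := measurableSet_eq_fun hFm hGm
  have hCm : MeasurableSet {z | F z < G z} := measurableSet_lt hFm hGm
  have swapInt : ∀ h : α → ℝ,
      ∫ z in {z | F z < G z}, h z ∂m = ∫ z in {z | G z < F z}, h (e z) ∂m := by
    intro h
    rw [← hme.setIntegral_preimage_emb hemb h {z | F z < G z}]
    congr 1
    ext z
    simp only [Set.preimage_setOf_eq, Set.mem_setOf_eq, hG, hinv]
  have hc : ∫ z in {z | F z < G z}, F z ∂m = ∫ z in {z | G z < F z}, G z ∂m := by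
    rw [swapInt F]
    exact setIntegral_congr_fun hAm fun z _ => (hG z).symm
  have hBcompl : {z | F z = G z}ᶜ = {z | G z < F z} ∪ {z | F z < G z} := by
    ext z
    simp only [Set.mem_compl_iff, Set.mem_setOf_eq, Set.mem_union]
    constructor
    · exact fun h => (lt_or_gt_of_ne h).symm.imp id id |>.symm.imp id id |>.elim (fun h => Or.inr h) (fun h => Or.inl h)
    · rintro (h | h) heq <;> simp [heq] at h
  have hdisj : Disjoint {z | G z < F z} {z | F z < G z} := by
    rw [Set.disjoint_left]
    intro z h1 h2
    simp only [Set.mem_setOf_eq] at h1 h2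
    exact absurd (lt_trans h1 h2) (lt_irrefl _)
  have habsi : Integrable (fun z => |F z - G z|) m := (hFi.sub hGi).abs
  have habs : ∫ z, |F z - G z| ∂m
      = 2 * ((∫ z in {z | G z < F z}, F z ∂m) - ∫ z in {z | G z < F z}, G z ∂m) := by
    have h0 : ∫ z in {z | F z = G z}, |F z - G z| ∂m = 0 := by
      rw [setIntegral_congr_fun hBm (g := fun _ => (0:ℝ)) fun z hz => by
        simp only [Set.mem_setOf_eq] at hz; simp [hz]]
      simp
    have hsplit := integral_add_compl hBm habsi
    rw [h0, zero_add, hBcompl,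
      setIntegral_union hdisj hCm habsi.integrableOn habsi.integrableOn] at hsplit
    have hA' : ∫ z in {z | G z < F z}, |F z - G z| ∂m
        = (∫ z in {z | G z < F z}, F z ∂m) - ∫ z in {z | G z < F z}, G z ∂m := by
      rw [setIntegral_congr_fun hAm (g := fun z => F z - G z) fun z hz => by
        simp only [Set.mem_setOf_eq] at hz
        exact abs_of_pos (sub_pos.mpr hz)]
      exact integral_sub hFi.integrableOn hGi.integrableOn
    have hC' : ∫ z in {z | F z < G z}, |F z - G z| ∂m
        = (∫ z in {z | G z < F z}, F z ∂m) - ∫ z in {z | G z < F z}, G z ∂m := by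
      rw [setIntegral_congr_fun hCm (g := fun z => G z - F z) fun z hz => by
        simp only [Set.mem_setOf_eq] at hz
        rw [abs_of_neg (sub_neg.mpr hz)]; ring]
      rw [swapInt (fun z => G z - F z)]
      rw [setIntegral_congr_fun hAm (g := fun z => F z - G z) fun z hz => by
        simp only [hG, hinv]]
      exact integral_sub hFi.integrableOn hGi.integrableOn
    rw [hA', hC'] at hsplit
    rw [← hsplit]; ring
  have htsplit := integral_add_compl hBm hFi
  rw [hBcompl, setIntegral_union hdisj hCm hFi.integrableOn hFi.integrableOn, htot] at htsplit
  rw [hc] at htsplit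
  rw [habs]
  linarith

/-- For strictly positive probability densities `p, q` with density ratio `r = p/q`,
`AUC(r) = 1/2 + (1/4) ∫∫ |p(x)q(x̃) − p(x̃)q(x)| dx dx̃`. -/
theorem stmt7 {𝒳 : Type*} [MeasurableSpace 𝒳] (lam : Measure 𝒳) [SigmaFinite lam]
    (p q : 𝒳 → ℝ) (hpm : Measurable p) (hqm : Measurable q)
    (hp0 : ∀ x, 0 < p x) (hq0 : ∀ x, 0 < q x)
    (hp1 : ∫ x, p x ∂lam = 1) (hq1 : ∫ x, q x ∂lam = 1) :
    auc (densMeasure lam p) (densMeasure lam q) (fun x => p x / q x) =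
      1 / 2 + (1 / 4) * ∫ z : 𝒳 × 𝒳, |p z.1 * q z.2 - p z.2 * q z.1| ∂(lam.prod lam) := by
  have hpi : Integrable p lam := by
    by_contra h; rw [integral_undef h] at hp1; norm_num at hp1
  have hqi : Integrable q lam := by
    by_contra h; rw [integral_undef h] at hq1; norm_num at hq1
  have hFm : Measurable (fun z : 𝒳 × 𝒳 => p z.1 * q z.2) :=
    (hpm.comp measurable_fst).mul (hqm.comp measurable_snd)
  have hGm : Measurable (fun z : 𝒳 × 𝒳 => p z.2 * q z.1) :=
    (hpm.comp measurable_snd).mul (hqm.comp measurable_fst)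
  have hFi : Integrable (fun z : 𝒳 × 𝒳 => p z.1 * q z.2) (lam.prod lam) := hpi.mul_prod hqi
  have hGi : Integrable (fun z : 𝒳 × 𝒳 => p z.2 * q z.1) (lam.prod lam) :=
    (hqi.mul_prod hpi).congr (Filter.Eventually.of_forall fun z => mul_comm _ _)
  have htot : ∫ z : 𝒳 × 𝒳, p z.1 * q z.2 ∂(lam.prod lam) = 1 := by
    rw [integral_prod_mul, hp1, hq1, mul_one]
  have hprod : (densMeasure lam p).prod (densMeasure lam q)
      = (lam.prod lam).withDensity fun z => ENNReal.ofReal (p z.1 * q z.2) := by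
    have h1 : SigmaFinite (densMeasure lam p) :=
      SigmaFinite.withDensity_ofReal _
    have h2 : SigmaFinite (densMeasure lam q) :=
      SigmaFinite.withDensity_ofReal _
    refine Measure.prod_eq fun s t hs ht => ?_
    rw [withDensity_apply _ (hs.prod ht), ← Measure.prod_restrict]
    have hco : ∀ z : 𝒳 × 𝒳, ENNReal.ofReal (p z.1 * q z.2)
        = ENNReal.ofReal (p z.1) * ENNReal.ofReal (q z.2) :=
      fun z => ENNReal.ofReal_mul (hp0 z.1).le
    rw [lintegral_congr hco,
      lintegral_prod_mul hpm.ennreal_ofReal.aemeasurable hqm.ennreal_ofReal.aemeasurable,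
      densMeasure, densMeasure, withDensity_apply _ hs, withDensity_apply _ ht]
  have hmeas : ∀ S : Set (𝒳 × 𝒳), MeasurableSet S →
      (((densMeasure lam p).prod (densMeasure lam q)) S).toReal
        = ∫ z in S, p z.1 * q z.2 ∂(lam.prod lam) := by
    intro S hS
    rw [hprod, withDensity_apply _ hS,
      ← ofReal_integral_eq_lintegral_ofReal hFi.restrict
        (Filter.Eventually.of_forall fun z => mul_nonneg (hp0 z.1).le (hq0 z.2).le),
      ENNReal.toReal_ofReal
        (setIntegral_nonneg hS fun z _ => mul_nonneg (hp0 z.1).le (hq0 z.2).le)]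
  have hset1 : {z : 𝒳 × 𝒳 | (fun x => p x / q x) z.2 < (fun x => p x / q x) z.1}
      = {z : 𝒳 × 𝒳 | p z.2 * q z.1 < p z.1 * q z.2} := by
    ext z
    simp only [Set.mem_setOf_eq]
    rw [div_lt_div_iff₀ (hq0 z.2) (hq0 z.1)]
  have hset2 : {z : 𝒳 × 𝒳 | (fun x => p x / q x) z.1 = (fun x => p x / q x) z.2}
      = {z : 𝒳 × 𝒳 | p z.1 * q z.2 = p z.2 * q z.1} := by
    ext z
    simp only [Set.mem_setOf_eq]
    rw [div_eq_div_iff (hq0 z.1).ne' (hq0 z.2).ne']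
  have hAm : MeasurableSet {z : 𝒳 × 𝒳 | p z.2 * q z.1 < p z.1 * q z.2} :=
    measurableSet_lt hGm hFm
  have hBm : MeasurableSet {z : 𝒳 × 𝒳 | p z.1 * q z.2 = p z.2 * q z.1} :=
    measurableSet_eq_fun hFm hGm
  unfold auc
  rw [hset1, hset2, hmeas _ hAm, hmeas _ hBm]
  exact auc_key (lam.prod lam) Prod.swap Measure.measurePreserving_swap
    MeasurableEquiv.prodComm.measurableEmbedding (fun z => Prod.swap_swap z)
    (fun z => p z.1 * q z.2) (fun z => p z.2 * q z.1) hFm hGm hFi hGi (fun z => rfl) htot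
end

section
/- Let p and q be probability densities on 𝒳 with p, q > 0 everywhere and r(x) := p(x)/q(x). Then ∫∫ |p(x)q(x̃) − p(x̃)q(x)| dx dx̃ = E_{X, X' ~ q, independent}[ |r(X) − r(X')| ]; consequently AUC(r) = 1/2 + (1/4)·E_{X, X' ~ q}[ |r(X) − r(X')| ]. -/
open MeasureTheory
open scoped ENNReal

/-- For strictly positive probability densities `p, q` with density ratio `r = p/q`,
`∫∫ |p(x)q(x̃) − p(x̃)q(x)| dx dx̃ = E_{X,X' ~ q}[|r(X) − r(X')|]`, and consequently
`AUC(r) = 1/2 + (1/4)·E_{X,X' ~ q}[|r(X) − r(X')|]`. -/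
theorem stmt8 {𝒳 : Type*} [MeasurableSpace 𝒳] (lam : Measure 𝒳) [SigmaFinite lam]
    (p q : 𝒳 → ℝ) (hpm : Measurable p) (hqm : Measurable q)
    (hp0 : ∀ x, 0 < p x) (hq0 : ∀ x, 0 < q x)
    (hp1 : ∫ x, p x ∂lam = 1) (hq1 : ∫ x, q x ∂lam = 1) :
    (∫ z : 𝒳 × 𝒳, |p z.1 * q z.2 - p z.2 * q z.1| ∂(lam.prod lam)) =
        ∫ z : 𝒳 × 𝒳, |p z.1 / q z.1 - p z.2 / q z.2|
          ∂((densMeasure lam q).prod (densMeasure lam q)) ∧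
      auc (densMeasure lam p) (densMeasure lam q) (fun x => p x / q x) =
        1 / 2 + (1 / 4) * ∫ z : 𝒳 × 𝒳, |p z.1 / q z.1 - p z.2 / q z.2|
          ∂((densMeasure lam q).prod (densMeasure lam q)) := by
  classical
  have hpi : Integrable p lam := by
    by_contra h; rw [integral_undef h] at hp1; norm_num at hp1
  have hqi : Integrable q lam := by
    by_contra h; rw [integral_undef h] at hq1; norm_num at hq1
  set r : 𝒳 → ℝ := fun x => p x / q x with hr_def
  have hrm : Measurable r := hpm.div hqm
  -- product of withDensity measures
  have prodD : ∀ (f g : 𝒳 → ℝ), Measurable f → Measurable g →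
      (∀ x, 0 ≤ f x) → (∀ x, 0 ≤ g x) → Integrable f lam → Integrable g lam →
      (densMeasure lam f).prod (densMeasure lam g)
        = (lam.prod lam).withDensity fun z => ENNReal.ofReal (f z.1 * g z.2) := by
    intro f g hfm hgm hf0 hg0 hfi hgi
    have hfin : ∀ (h : 𝒳 → ℝ), Measurable h → (∀ x, 0 ≤ h x) → Integrable h lam →
        IsFiniteMeasure (densMeasure lam h) := by
      intro h hm h0 hi
      constructor
      rw [densMeasure, withDensity_apply _ MeasurableSet.univ, setLIntegral_univ,
        ← ofReal_integral_eq_lintegral_ofReal hi (Filter.Eventually.of_forall h0)]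
      exact ENNReal.ofReal_lt_top
    haveI h1 := hfin f hfm hf0 hfi
    haveI h2 := hfin g hgm hg0 hgi
    refine Measure.prod_eq fun s t hs ht => ?_
    rw [withDensity_apply _ (hs.prod ht), ← Measure.prod_restrict]
    have hpt : ∀ z : 𝒳 × 𝒳, ENNReal.ofReal (f z.1 * g z.2)
        = ENNReal.ofReal (f z.1) * ENNReal.ofReal (g z.2) := fun z =>
      ENNReal.ofReal_mul (hf0 _)
    simp_rw [hpt]
    rw [lintegral_prod_mul hfm.ennreal_ofReal.aemeasurable
      hgm.ennreal_ofReal.aemeasurable]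
    rw [densMeasure, densMeasure, withDensity_apply _ hs, withDensity_apply _ ht]
  -- integral w.r.t. a withDensity measure
  have intD : ∀ (w : 𝒳 × 𝒳 → ℝ), Measurable w → (∀ z, 0 ≤ w z) → ∀ (g : 𝒳 × 𝒳 → ℝ),
      (∫ z, g z ∂((lam.prod lam).withDensity fun z => ENNReal.ofReal (w z)))
        = ∫ z, w z * g z ∂(lam.prod lam) := by
    intro w hw hw0 g
    have h1 : (fun z => ENNReal.ofReal (w z))
        = fun z => ((fun z => (w z).toNNReal) z : ℝ≥0∞) := rfl
    have hwm : Measurable fun z => (w z).toNNReal := continuous_real_toNNReal.measurable.comp hw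
    rw [h1, integral_withDensity_eq_integral_smul hwm]
    refine integral_congr_ae (Filter.Eventually.of_forall fun z => ?_)
    simp [NNReal.smul_def, Real.coe_toNNReal _ (hw0 z)]
  set F : 𝒳 × 𝒳 → ℝ := fun z => p z.1 * q z.2 with hF_def
  set G : 𝒳 × 𝒳 → ℝ := fun z => p z.2 * q z.1 with hG_def
  have hFi : Integrable F (lam.prod lam) := hpi.mul_prod hqi
  have hGi : Integrable G (lam.prod lam) := by
    have := hqi.mul_prod hpi
    exact this.congr (Filter.Eventually.of_forall fun z => mul_comm _ _)
  -- sets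
  set A : Set (𝒳 × 𝒳) := {z | r z.2 < r z.1} with hA_def
  set Aeq : Set (𝒳 × 𝒳) := {z | r z.1 = r z.2} with hAeq_def
  set A' : Set (𝒳 × 𝒳) := {z | r z.1 < r z.2} with hA'_def
  have hAm : MeasurableSet A :=
    measurableSet_lt (hrm.comp measurable_snd) (hrm.comp measurable_fst)
  have hA'm : MeasurableSet A' :=
    measurableSet_lt (hrm.comp measurable_fst) (hrm.comp measurable_snd)
  have hEm : MeasurableSet Aeq :=
    measurableSet_eq_fun (hrm.comp measurable_fst) (hrm.comp measurable_snd)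
  -- swap
  have hswap : MeasurePreserving (Prod.swap : 𝒳 × 𝒳 → 𝒳 × 𝒳) (lam.prod lam) (lam.prod lam) :=
    Measure.measurePreserving_swap
  have hemb : MeasurableEmbedding (Prod.swap : 𝒳 × 𝒳 → 𝒳 × 𝒳) :=
    MeasurableEquiv.prodComm.measurableEmbedding
  have hpre : (Prod.swap ⁻¹' A' : Set (𝒳 × 𝒳)) = A := by
    ext z; simp [hA_def, hA'_def, Prod.swap]
  have hb' : ∫ z in A', F z ∂(lam.prod lam) = ∫ z in A, G z ∂(lam.prod lam) := by
    rw [← hswap.setIntegral_preimage_emb hemb F A', hpre]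
    rfl
  have hdiff : ∫ z in A', (G z - F z) ∂(lam.prod lam)
      = ∫ z in A, (F z - G z) ∂(lam.prod lam) := by
    rw [← hswap.setIntegral_preimage_emb hemb (fun z => G z - F z) A', hpre]
    rfl
  -- partition
  have hdisj1 : Disjoint A Aeq := by
    rw [Set.disjoint_left]; intro z hz1 hz2; exact hz1.ne' hz2
  have hdisj2 : Disjoint (A ∪ Aeq) A' := by
    rw [Set.disjoint_union_left]
    constructor
    · rw [Set.disjoint_left]; intro z hz1 hz2
      have hz1' : r z.2 < r z.1 := hz1
      have hz2' : r z.1 < r z.2 := hz2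
      exact lt_asymm hz1' hz2'
    · rw [Set.disjoint_left]; intro z hz1 hz2
      have hz1' : r z.1 = r z.2 := hz1
      have hz2' : r z.1 < r z.2 := hz2
      exact hz2'.ne hz1'
  have huniv : (Set.univ : Set (𝒳 × 𝒳)) = (A ∪ Aeq) ∪ A' := by
    ext z
    simp only [Set.mem_univ, true_iff, Set.mem_union, hA_def, hAeq_def, hA'_def, Set.mem_setOf_eq]
    rcases lt_trichotomy (r z.1) (r z.2) with h | h | h
    · exact Or.inr h
    · exact Or.inl (Or.inr h)
    · exact Or.inl (Or.inl h)
  have total : ∀ (g : 𝒳 × 𝒳 → ℝ), Integrable g (lam.prod lam) →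
      ∫ z, g z ∂(lam.prod lam) = (∫ z in A, g z ∂(lam.prod lam))
        + (∫ z in Aeq, g z ∂(lam.prod lam)) + ∫ z in A', g z ∂(lam.prod lam) := by
    intro g hg
    rw [← setIntegral_univ (f := g), huniv,
      setIntegral_union hdisj2 hA'm hg.integrableOn hg.integrableOn,
      setIntegral_union hdisj1 hEm hg.integrableOn hg.integrableOn]
  -- pointwise facts
  have hqne : ∀ x, q x ≠ 0 := fun x => (hq0 x).ne'
  have hFG_A : ∀ z ∈ A, G z ≤ F z := by
    intro z hz
    have hz' : r z.2 < r z.1 := hz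
    have := (div_lt_div_iff₀ (hq0 z.2) (hq0 z.1)).mp hz'
    exact le_of_lt this
  have hFG_E : ∀ z ∈ Aeq, F z = G z := by
    intro z hz
    have hz' : r z.1 = r z.2 := hz
    have := (div_eq_div_iff (hqne z.1) (hqne z.2)).mp hz'
    exact this
  have hFG_A' : ∀ z ∈ A', F z ≤ G z := by
    intro z hz
    have hz' : r z.1 < r z.2 := hz
    have := (div_lt_div_iff₀ (hq0 z.1) (hq0 z.2)).mp hz'
    exact le_of_lt this
  -- D
  have habs : Integrable (fun z => |F z - G z|) (lam.prod lam) := (hFi.sub hGi).abs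
  set a : ℝ := ∫ z in A, F z ∂(lam.prod lam) with ha_def
  set b : ℝ := ∫ z in A, G z ∂(lam.prod lam) with hb_def
  set e : ℝ := ∫ z in Aeq, F z ∂(lam.prod lam) with he_def
  set D : ℝ := ∫ z, |F z - G z| ∂(lam.prod lam) with hD_def
  have hDval : D = 2 * (a - b) := by
    have h1 : ∫ z in A, |F z - G z| ∂(lam.prod lam) = a - b := by
      rw [setIntegral_congr_fun hAm (g := fun z => F z - G z)
        (fun z hz => abs_of_nonneg (sub_nonneg.mpr (hFG_A z hz))),
        integral_sub hFi.integrableOn hGi.integrableOn]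
    have h2 : ∫ z in Aeq, |F z - G z| ∂(lam.prod lam) = 0 := by
      rw [setIntegral_congr_fun hEm (g := fun _ => (0 : ℝ))
        (fun z hz => by rw [hFG_E z hz, sub_self, abs_zero])]
      simp
    have h3 : ∫ z in A', |F z - G z| ∂(lam.prod lam) = a - b := by
      rw [setIntegral_congr_fun hA'm (g := fun z => G z - F z)
        (fun z hz => by rw [abs_sub_comm]; exact abs_of_nonneg (sub_nonneg.mpr (hFG_A' z hz))),
        hdiff, integral_sub hFi.integrableOn hGi.integrableOn]
    rw [hD_def, total _ habs, h1, h2, h3]; ring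
  have hsum : a + e + b = 1 := by
    have hint1 : ∫ z, F z ∂(lam.prod lam) = 1 := by
      rw [hF_def, integral_prod_mul p q, hp1, hq1, one_mul]
    rw [total F hFi, hb'] at hint1
    linarith [hint1]
  -- measures of sets
  have measμν := prodD p q hpm hqm (fun x => (hp0 x).le) (fun x => (hq0 x).le) hpi hqi
  have meas_set : ∀ S : Set (𝒳 × 𝒳), MeasurableSet S →
      (((densMeasure lam p).prod (densMeasure lam q)) S).toReal
        = ∫ z in S, F z ∂(lam.prod lam) := by
    intro S hS
    rw [measμν, withDensity_apply _ hS,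
      ← ofReal_integral_eq_lintegral_ofReal hFi.integrableOn
        (Filter.Eventually.of_forall fun z => mul_nonneg (hp0 _).le (hq0 _).le),
      ENNReal.toReal_ofReal
        (setIntegral_nonneg hS fun z _ => mul_nonneg (hp0 _).le (hq0 _).le)]
  -- first conjunct
  have measνν := prodD q q hqm hqm (fun x => (hq0 x).le) (fun x => (hq0 x).le) hqi hqi
  have conj1 : (∫ z : 𝒳 × 𝒳, |p z.1 * q z.2 - p z.2 * q z.1| ∂(lam.prod lam))
      = ∫ z : 𝒳 × 𝒳, |p z.1 / q z.1 - p z.2 / q z.2|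
          ∂((densMeasure lam q).prod (densMeasure lam q)) := by
    rw [measνν, intD (fun z => q z.1 * q z.2)
      ((hqm.comp measurable_fst).mul (hqm.comp measurable_snd))
      (fun z => mul_nonneg (hq0 _).le (hq0 _).le)]
    refine integral_congr_ae (Filter.Eventually.of_forall fun z => ?_)
    have hq12 : (0 : ℝ) < q z.1 * q z.2 := mul_pos (hq0 _) (hq0 _)
    show |p z.1 * q z.2 - p z.2 * q z.1| = q z.1 * q z.2 * |p z.1 / q z.1 - p z.2 / q z.2|
    rw [← abs_of_pos hq12, ← abs_mul]
    congr 1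
    field_simp [hqne z.1, hqne z.2]
  have hDD : D = ∫ z : 𝒳 × 𝒳, |p z.1 / q z.1 - p z.2 / q z.2|
      ∂((densMeasure lam q).prod (densMeasure lam q)) := by
    rw [hD_def, ← conj1]
  refine ⟨conj1, ?_⟩
  have hauc : auc (densMeasure lam p) (densMeasure lam q) r = a + (1 / 2) * e := by
    rw [auc, meas_set A hAm, meas_set Aeq hEm]
  rw [hauc, ← hDD]
  linarith [hDval, hsum]
end

section
/- Let p and q be probability densities on 𝒳 and let φ*(x) := 1{p(x) > q(x)}. Treating φ* as a {0,1}-valued scoring function, AUC(φ*) = 1/2 + (1/2)·TV(p,q), where TV(p,q) := (1/2)∫|p(x) − q(x)| dx. -/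
open MeasureTheory
open scoped ENNReal

lemma densMeasure_apply {𝒳 : Type*} [MeasurableSpace 𝒳] (lam : Measure 𝒳) (p : 𝒳 → ℝ)
    (hpint : Integrable p lam) (hp0 : ∀ x, 0 ≤ p x) {S : Set 𝒳} (hS : MeasurableSet S) :
    densMeasure lam p S = ENNReal.ofReal (∫ x in S, p x ∂lam) := by
  rw [densMeasure, withDensity_apply _ hS,
    ← ofReal_integral_eq_lintegral_ofReal hpint.integrableOn (ae_of_all _ hp0)]

/-- For probability densities `p, q` and the Bayes classifier
`φ*(x) := 1{p(x) > q(x)}` viewed as a `{0,1}`-valued scoring function,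
`AUC(φ*) = 1/2 + (1/2)·TV(p,q)`. -/
theorem stmt10 {𝒳 : Type*} [MeasurableSpace 𝒳] (lam : Measure 𝒳) [SigmaFinite lam]
    (p q : 𝒳 → ℝ) (hpm : Measurable p) (hqm : Measurable q)
    (hp0 : ∀ x, 0 ≤ p x) (hq0 : ∀ x, 0 ≤ q x)
    (hp1 : ∫ x, p x ∂lam = 1) (hq1 : ∫ x, q x ∂lam = 1) :
    auc (densMeasure lam p) (densMeasure lam q) (fun x => if q x < p x then (1 : ℝ) else 0) =
      1 / 2 + (1 / 2) * tvDist lam p q := by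
  have hpint : Integrable p lam := by
    by_contra h
    rw [integral_undef h] at hp1; norm_num at hp1
  have hqint : Integrable q lam := by
    by_contra h
    rw [integral_undef h] at hq1; norm_num at hq1
  set A : Set 𝒳 := {x | q x < p x} with hAdef
  have hA : MeasurableSet A := measurableSet_lt hqm hpm
  set s : 𝒳 → ℝ := fun x => if q x < p x then (1 : ℝ) else 0 with hs
  -- set identities
  have hset1 : {z : 𝒳 × 𝒳 | s z.2 < s z.1} = A ×ˢ Aᶜ := by
    ext ⟨x, y⟩
    simp only [hs, Set.mem_setOf_eq, Set.mem_prod, Set.mem_compl_iff, hAdef]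
    split_ifs with h1 h2 h2 <;> simp [h1, h2]
  have hset2 : {z : 𝒳 × 𝒳 | s z.1 = s z.2} = (A ×ˢ A) ∪ (Aᶜ ×ˢ Aᶜ) := by
    ext ⟨x, y⟩
    simp only [hs, Set.mem_setOf_eq, Set.mem_union, Set.mem_prod, Set.mem_compl_iff, hAdef]
    split_ifs with h1 h2 h2 <;> simp [h1, h2]
  set a : ℝ := ∫ x in A, p x ∂lam with ha
  set b : ℝ := ∫ x in A, q x ∂lam with hb
  have ha0 : 0 ≤ a := setIntegral_nonneg hA fun x _ => hp0 x
  have hb0 : 0 ≤ b := setIntegral_nonneg hA fun x _ => hq0 x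
  have hac : ∫ x in Aᶜ, p x ∂lam = 1 - a := by
    have := integral_add_compl hA hpint
    rw [hp1] at this; linarith
  have hbc : ∫ x in Aᶜ, q x ∂lam = 1 - b := by
    have := integral_add_compl hA hqint
    rw [hq1] at this; linarith
  have hac0 : 0 ≤ 1 - a := hac ▸ setIntegral_nonneg hA.compl fun x _ => hp0 x
  have hbc0 : 0 ≤ 1 - b := hbc ▸ setIntegral_nonneg hA.compl fun x _ => hq0 x
  -- measure values
  have hμA : densMeasure lam p A = ENNReal.ofReal a := densMeasure_apply lam p hpint hp0 hA
  have hμAc : densMeasure lam p Aᶜ = ENNReal.ofReal (1 - a) := by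
    rw [densMeasure_apply lam p hpint hp0 hA.compl, hac]
  have hνA : densMeasure lam q A = ENNReal.ofReal b := densMeasure_apply lam q hqint hq0 hA
  have hνAc : densMeasure lam q Aᶜ = ENNReal.ofReal (1 - b) := by
    rw [densMeasure_apply lam q hqint hq0 hA.compl, hbc]
  -- TV computation
  have habs : ∫ x, |p x - q x| ∂lam = 2 * (a - b) := by
    have hint : Integrable (fun x => |p x - q x|) lam := (hpint.sub hqint).abs
    have hsplit := integral_add_compl hA hint
    have h1 : ∫ x in A, |p x - q x| ∂lam = a - b := by
      rw [setIntegral_congr_fun hA (g := fun x => p x - q x)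
        (fun x hx => abs_of_pos (sub_pos.mpr (by exact hx))),
        integral_sub hpint.integrableOn hqint.integrableOn]
    have h2 : ∫ x in Aᶜ, |p x - q x| ∂lam = (1 - b) - (1 - a) := by
      rw [setIntegral_congr_fun hA.compl (g := fun x => q x - p x)
        (fun x hx => by
          rw [abs_sub_comm]
          exact abs_of_nonneg (sub_nonneg.mpr (not_lt.mp (by exact hx)))),
        integral_sub hqint.integrableOn hpint.integrableOn, hac, hbc]
    rw [h1, h2] at hsplit
    linarith
  haveI : IsFiniteMeasure (densMeasure lam q) := by
    constructor
    rw [densMeasure_apply lam q hqint hq0 MeasurableSet.univ]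
    exact ENNReal.ofReal_lt_top
  -- put it together
  rw [auc, hset1, hset2, Measure.prod_prod,
    measure_union (Set.disjoint_left.mpr fun z hz hz' => hz'.1 hz.1) (hA.compl.prod hA.compl),
    Measure.prod_prod, Measure.prod_prod, hμA, hμAc, hνA, hνAc,
    ENNReal.toReal_add (ENNReal.mul_ne_top ENNReal.ofReal_ne_top ENNReal.ofReal_ne_top)
      (ENNReal.mul_ne_top ENNReal.ofReal_ne_top ENNReal.ofReal_ne_top),
    ENNReal.toReal_mul, ENNReal.toReal_mul, ENNReal.toReal_mul,
    ENNReal.toReal_ofReal ha0, ENNReal.toReal_ofReal hb0,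
    ENNReal.toReal_ofReal hac0, ENNReal.toReal_ofReal hbc0,
    tvDist, habs]
  ring
end

section
/- Let p and q be probability densities on 𝒳, let s : 𝒳 → ℝ be measurable, let X_1, …, X_m be i.i.d. ~ p, let X̃ ~ q be independent of them, and let ξ ~ Uniform[0,1] be independent of everything. Define the conformal p-value U := (1/(m+1))( Σ_{i=1}^{m} 1{s(X_i) < s(X̃)} + ξ·(1 + Σ_{i=1}^{m} 1{s(X_i) = s(X̃)}) ). Then E[U] = (m/(m+1))·(1 − AUC(s)) + 1/(2(m+1)). -/
open MeasureTheory
open scoped ENNReal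

lemma densMeasure_prob {𝒳 : Type*} [MeasurableSpace 𝒳] (lam : Measure 𝒳)
    (p : 𝒳 → ℝ) (hp0 : ∀ x, 0 ≤ p x) (hp1 : ∫ x, p x ∂lam = 1) :
    IsProbabilityMeasure (densMeasure lam p) := by
  have hint : Integrable p lam := by
    by_contra h
    rw [integral_undef h] at hp1; norm_num at hp1
  constructor
  rw [densMeasure, withDensity_apply _ MeasurableSet.univ, Measure.restrict_univ,
    ← MeasureTheory.ofReal_integral_eq_lintegral_ofReal hint (Filter.Eventually.of_forall hp0),
    hp1, ENNReal.ofReal_one]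

open ProbabilityTheory

/-- With `X_1, …, X_m` i.i.d. from the density `p`, `X̃` from the density `q`
independent of them, and an independent tie-breaking variable `ξ ~ Uniform[0,1]`, the conformal
p-value `U := (1/(m+1))(Σ_{i=1}^m 1{s(X_i) < s(X̃)} + ξ·(1 + Σ_{i=1}^m 1{s(X_i) = s(X̃)}))`
satisfies `E[U] = (m/(m+1))·(1 − AUC(s)) + 1/(2(m+1))`. -/
theorem stmt12 {𝒳 Ω : Type*} [MeasurableSpace 𝒳] [MeasurableSpace Ω]
    (lam : Measure 𝒳) [SigmaFinite lam]
    (p q : 𝒳 → ℝ) (hpm : Measurable p) (hqm : Measurable q)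
    (hp0 : ∀ x, 0 ≤ p x) (hq0 : ∀ x, 0 ≤ q x)
    (hp1 : ∫ x, p x ∂lam = 1) (hq1 : ∫ x, q x ∂lam = 1)
    (s : 𝒳 → ℝ) (hs : Measurable s)
    (P : Measure Ω) [IsProbabilityMeasure P] (m : ℕ)
    (X : Fin m → Ω → 𝒳) (hXm : ∀ i, Measurable (X i))
    (Xt : Ω → 𝒳) (hXtm : Measurable Xt)
    (ξ : Ω → ℝ) (hξm : Measurable ξ)
    (hiid : iIndepFun X P)
    (hXlaw : ∀ i, Measure.map (X i) P = densMeasure lam p)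
    (hXtlaw : Measure.map Xt P = densMeasure lam q)
    (hξlaw : Measure.map ξ P = volume.restrict (Set.Icc (0 : ℝ) 1))
    (hindep : IndepFun (fun ω i => X i ω) (fun ω => (Xt ω, ξ ω)) P)
    (hindep2 : IndepFun Xt ξ P) :
    ∫ ω, (1 / (m + 1 : ℝ)) *
        ((∑ i : Fin m, if s (X i ω) < s (Xt ω) then (1 : ℝ) else 0) +
          ξ ω * (1 + ∑ i : Fin m, if s (X i ω) = s (Xt ω) then (1 : ℝ) else 0)) ∂P =
      (m / (m + 1 : ℝ)) * (1 - auc (densMeasure lam p) (densMeasure lam q) s) +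
        1 / (2 * (m + 1 : ℝ)) := by
  set μ := densMeasure lam p with hμ
  set ν := densMeasure lam q with hν
  have hμP : IsProbabilityMeasure μ := densMeasure_prob lam p hp0 hp1
  have hνP : IsProbabilityMeasure ν := densMeasure_prob lam q hq0 hq1
  set Λ : Measure ℝ := volume.restrict (Set.Icc 0 1) with hΛ
  have hΛP : IsProbabilityMeasure Λ := by
    constructor
    rw [hΛ, Measure.restrict_apply_univ, Real.volume_Icc]
    norm_num
  set A : Set (𝒳 × 𝒳) := {z | s z.1 < s z.2} with hA
  set B : Set (𝒳 × 𝒳) := {z | s z.2 < s z.1} with hB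
  set E : Set (𝒳 × 𝒳) := {z | s z.1 = s z.2} with hE
  have hAm : MeasurableSet A := measurableSet_lt (hs.comp measurable_fst) (hs.comp measurable_snd)
  have hBm : MeasurableSet B := measurableSet_lt (hs.comp measurable_snd) (hs.comp measurable_fst)
  have hEm : MeasurableSet E :=
    measurableSet_eq_fun (hs.comp measurable_fst) (hs.comp measurable_snd)
  set a := ((μ.prod ν) A).toReal with ha
  set b := ((μ.prod ν) B).toReal with hb
  set e := ((μ.prod ν) E).toReal with he
  -- a + b + e = 1
  have habe : a + b + e = 1 := by
    have hdAB : Disjoint A B := by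
      rw [Set.disjoint_left]
      intro z hz1 hz2
      simp only [hA, hB, Set.mem_setOf_eq] at hz1 hz2
      exact lt_asymm hz1 hz2
    have hdABE : Disjoint (A ∪ B) E := by
      rw [Set.disjoint_left]
      rintro z (hz | hz) hz2 <;> simp only [hE, Set.mem_setOf_eq] at hz2 <;>
        simp only [hA, hB, Set.mem_setOf_eq] at hz <;> rw [hz2] at hz <;> exact lt_irrefl _ hz
    have hU : A ∪ B ∪ E = Set.univ := by
      ext z
      simp only [Set.mem_union, hA, hB, hE, Set.mem_setOf_eq, Set.mem_univ, iff_true]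
      rcases lt_trichotomy (s z.1) (s z.2) with h | h | h
      · exact Or.inl (Or.inl h)
      · exact Or.inr h
      · exact Or.inl (Or.inr h)
    have h1 : (μ.prod ν) A + (μ.prod ν) B + (μ.prod ν) E = 1 := by
      rw [← measure_union hdAB hBm, ← measure_union hdABE hEm, hU, measure_univ]
    have h2 := congrArg ENNReal.toReal h1
    rwa [ENNReal.toReal_add (ENNReal.add_ne_top.mpr ⟨measure_ne_top _ _, measure_ne_top _ _⟩)
      (measure_ne_top _ _), ENNReal.toReal_add (measure_ne_top _ _) (measure_ne_top _ _),
      ENNReal.toReal_one] at h2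
  -- joint laws
  have hXtξ : Measure.map (fun ω => (Xt ω, ξ ω)) P = ν.prod Λ := by
    rw [← hXtlaw, ← hξlaw]
    exact (indepFun_iff_map_prod_eq_prod_map_map hXtm.aemeasurable hξm.aemeasurable).mp hindep2
  have hlawi : ∀ i, Measure.map (fun ω => ((X i ω, Xt ω), ξ ω)) P = (μ.prod ν).prod Λ := by
    intro i
    have h1 : IndepFun (X i) (fun ω => (Xt ω, ξ ω)) P :=
      hindep.comp (measurable_pi_apply i) measurable_id
    have h2 : Measure.map (fun ω => (X i ω, (Xt ω, ξ ω))) P = μ.prod (ν.prod Λ) := by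
      rw [(indepFun_iff_map_prod_eq_prod_map_map (hXm i).aemeasurable
        (hXtm.prodMk hξm).aemeasurable).mp h1, hXlaw i, hXtξ]
    have h3 : (fun ω => ((X i ω, Xt ω), ξ ω)) =
        (MeasurableEquiv.prodAssoc (α := 𝒳) (β := 𝒳) (γ := ℝ)).symm ∘
          fun ω => (X i ω, (Xt ω, ξ ω)) := rfl
    rw [h3, ← Measure.map_map (MeasurableEquiv.prodAssoc.symm.measurable)
      ((hXm i).prodMk (hXtm.prodMk hξm)), h2, ← Measure.prodAssoc_prod,
      MeasurableEquiv.map_symm_map]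
  -- measurability of indicator-style maps
  have hfA : Measurable fun z : 𝒳 × 𝒳 => if s z.1 < s z.2 then (1 : ℝ) else 0 :=
    Measurable.ite hAm measurable_const measurable_const
  have hfE : Measurable fun z : 𝒳 × 𝒳 => if s z.1 = s z.2 then (1 : ℝ) else 0 :=
    Measurable.ite hEm measurable_const measurable_const
  -- key integral identities
  have hintA : ∀ i : Fin m, ∫ ω, (if s (X i ω) < s (Xt ω) then (1 : ℝ) else 0) ∂P = a := by
    intro i
    have hmap : Measurable fun ω => ((X i ω, Xt ω), ξ ω) :=
      ((hXm i).prodMk hXtm).prodMk hξm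
    have := integral_map (μ := P) (f := fun w : (𝒳 × 𝒳) × ℝ =>
        (if s w.1.1 < s w.1.2 then (1 : ℝ) else 0)) hmap.aemeasurable
      ((hfA.comp measurable_fst).aestronglyMeasurable)
    rw [hlawi i] at this
    rw [← this]
    have heq : ∀ w : (𝒳 × 𝒳) × ℝ, (if s w.1.1 < s w.1.2 then (1 : ℝ) else 0) =
        (fun z : 𝒳 × 𝒳 => if s z.1 < s z.2 then (1 : ℝ) else 0) w.1 * (fun _ : ℝ => (1 : ℝ)) w.2 :=
      fun w => by simp
    calc ∫ w, (if s w.1.1 < s w.1.2 then (1 : ℝ) else 0) ∂(μ.prod ν).prod Λ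
        = ∫ w : (𝒳 × 𝒳) × ℝ, (fun z : 𝒳 × 𝒳 => if s z.1 < s z.2 then (1 : ℝ) else 0) w.1 *
            (fun _ : ℝ => (1 : ℝ)) w.2 ∂(μ.prod ν).prod Λ := by
          exact integral_congr_ae (Filter.Eventually.of_forall heq)
      _ = (∫ z, (if s z.1 < s z.2 then (1 : ℝ) else 0) ∂μ.prod ν) * ∫ _ : ℝ, (1 : ℝ) ∂Λ :=
          integral_prod_mul (μ := μ.prod ν) (ν := Λ)
            (fun z : 𝒳 × 𝒳 => if s z.1 < s z.2 then (1 : ℝ) else 0) (fun _ : ℝ => (1 : ℝ))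
      _ = a := by
          rw [integral_const, Measure.real, measure_univ]
          have hind : (fun z : 𝒳 × 𝒳 => if s z.1 < s z.2 then (1 : ℝ) else 0) = A.indicator 1 := by
            ext z; simp [Set.indicator_apply, hA]
          rw [hind, integral_indicator_one hAm]
          simp [ha, Measure.real]
  have hξhalf : ∫ ω, ξ ω ∂P = 1 / 2 := by
    have h1 := integral_map (μ := P) (f := fun t : ℝ => t) hξm.aemeasurable
      aestronglyMeasurable_id
    rw [hξlaw] at h1
    rw [← h1]
    have : ∫ t, t ∂(volume.restrict (Set.Icc (0:ℝ) 1)) = ∫ t in (0:ℝ)..1, t := by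
      rw [intervalIntegral.integral_of_le zero_le_one, ← MeasureTheory.integral_Icc_eq_integral_Ioc]
    rw [this, integral_id]; norm_num
  have hintE : ∀ i : Fin m, ∫ ω, ξ ω * (if s (X i ω) = s (Xt ω) then (1 : ℝ) else 0) ∂P
      = e * (1 / 2) := by
    intro i
    have hmap : Measurable fun ω => ((X i ω, Xt ω), ξ ω) :=
      ((hXm i).prodMk hXtm).prodMk hξm
    have hg : Measurable fun w : (𝒳 × 𝒳) × ℝ =>
        (if s w.1.1 = s w.1.2 then (1 : ℝ) else 0) * w.2 :=
      (hfE.comp measurable_fst).mul measurable_snd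
    have h1 := integral_map (μ := P) (f := fun w : (𝒳 × 𝒳) × ℝ =>
        (if s w.1.1 = s w.1.2 then (1 : ℝ) else 0) * w.2) hmap.aemeasurable
      hg.aestronglyMeasurable
    rw [hlawi i] at h1
    have h2 : ∀ ω, ξ ω * (if s (X i ω) = s (Xt ω) then (1 : ℝ) else 0) =
        (if s (X i ω) = s (Xt ω) then (1 : ℝ) else 0) * ξ ω := fun ω => mul_comm _ _
    calc ∫ ω, ξ ω * (if s (X i ω) = s (Xt ω) then (1 : ℝ) else 0) ∂P
        = ∫ ω, (if s (X i ω) = s (Xt ω) then (1 : ℝ) else 0) * ξ ω ∂P :=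
          integral_congr_ae (Filter.Eventually.of_forall h2)
      _ = ∫ w : (𝒳 × 𝒳) × ℝ, (if s w.1.1 = s w.1.2 then (1 : ℝ) else 0) * w.2
            ∂(μ.prod ν).prod Λ := h1.symm
      _ = (∫ z, (if s z.1 = s z.2 then (1 : ℝ) else 0) ∂μ.prod ν) * ∫ t : ℝ, t ∂Λ :=
          integral_prod_mul (μ := μ.prod ν) (ν := Λ)
            (fun z : 𝒳 × 𝒳 => if s z.1 = s z.2 then (1 : ℝ) else 0) (fun t : ℝ => t)
      _ = e * (1 / 2) := by
          have hind : (fun z : 𝒳 × 𝒳 => if s z.1 = s z.2 then (1 : ℝ) else 0) = E.indicator 1 := by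
            ext z; simp [Set.indicator_apply, hE]
          have hhalf : ∫ t : ℝ, t ∂Λ = 1 / 2 := by
            rw [hΛ]
            have : ∫ t, t ∂(volume.restrict (Set.Icc (0:ℝ) 1)) = ∫ t in (0:ℝ)..1, t := by
              rw [intervalIntegral.integral_of_le zero_le_one,
                ← MeasureTheory.integral_Icc_eq_integral_Ioc]
            rw [this, integral_id]; norm_num
          rw [hind, integral_indicator_one hEm, hhalf, he]
          rfl
  -- integrability
  have hIA : ∀ i : Fin m, Integrable (fun ω => if s (X i ω) < s (Xt ω) then (1 : ℝ) else 0) P := by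
    intro i
    have hm : Measurable fun ω => if s (X i ω) < s (Xt ω) then (1 : ℝ) else 0 :=
      hfA.comp ((hXm i).prodMk hXtm)
    refine (integrable_const (1 : ℝ)).mono' hm.aestronglyMeasurable ?_
    filter_upwards with ω
    split_ifs <;> simp
  have hIξ : Integrable ξ P := by
    have h1 : Integrable (fun t : ℝ => t) Λ :=
      (intervalIntegrable_iff_integrableOn_Icc_of_le zero_le_one).mp
        (continuous_id.intervalIntegrable 0 1)
    rw [← hξlaw] at h1
    exact (integrable_map_measure aestronglyMeasurable_id hξm.aemeasurable).mp h1
  have hIE : ∀ i : Fin m,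
      Integrable (fun ω => ξ ω * (if s (X i ω) = s (Xt ω) then (1 : ℝ) else 0)) P := by
    intro i
    have hm : Measurable fun ω => ξ ω * (if s (X i ω) = s (Xt ω) then (1 : ℝ) else 0) :=
      hξm.mul (hfE.comp ((hXm i).prodMk hXtm))
    refine hIξ.norm.mono' hm.aestronglyMeasurable ?_
    filter_upwards with ω
    rw [norm_mul]
    split_ifs <;> simp [abs_nonneg]
  -- put everything together
  have hrw : ∀ ω : Ω, (1 / (m + 1 : ℝ)) *
        ((∑ i : Fin m, if s (X i ω) < s (Xt ω) then (1 : ℝ) else 0) +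
          ξ ω * (1 + ∑ i : Fin m, if s (X i ω) = s (Xt ω) then (1 : ℝ) else 0)) =
      (1 / (m + 1 : ℝ)) *
        ((∑ i : Fin m, if s (X i ω) < s (Xt ω) then (1 : ℝ) else 0) + (ξ ω +
          ∑ i : Fin m, ξ ω * (if s (X i ω) = s (Xt ω) then (1 : ℝ) else 0))) := by
    intro ω
    rw [← Finset.mul_sum]
    ring
  rw [integral_congr_ae (Filter.Eventually.of_forall hrw), integral_const_mul]
  have e1 : ∫ ω, ((∑ i : Fin m, if s (X i ω) < s (Xt ω) then (1 : ℝ) else 0) + (ξ ω +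
        ∑ i : Fin m, ξ ω * (if s (X i ω) = s (Xt ω) then (1 : ℝ) else 0))) ∂P =
      (m : ℝ) * a + (1 / 2 + (m : ℝ) * (e * (1 / 2))) := by
    have hsumA : Integrable
        (fun ω => ∑ i : Fin m, if s (X i ω) < s (Xt ω) then (1 : ℝ) else 0) P :=
      integrable_finset_sum _ fun i _ => hIA i
    have hsumE : Integrable
        (fun ω => ∑ i : Fin m, ξ ω * (if s (X i ω) = s (Xt ω) then (1 : ℝ) else 0)) P :=
      integrable_finset_sum _ fun i _ => hIE i
    have hg : Integrable (fun ω => ξ ω +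
        ∑ i : Fin m, ξ ω * (if s (X i ω) = s (Xt ω) then (1 : ℝ) else 0)) P := hIξ.add hsumE
    rw [integral_add hsumA hg, integral_add hIξ hsumE,
      integral_finset_sum _ (fun i _ => hIA i), integral_finset_sum _ (fun i _ => hIE i)]
    simp only [hintA, hintE, hξhalf, Finset.sum_const, Finset.card_univ, Fintype.card_fin,
      nsmul_eq_mul]
  rw [e1]
  -- arithmetic
  have hauc : auc μ ν s = b + (1 / 2) * e := rfl
  rw [hauc]
  have hm1 : (m : ℝ) + 1 ≠ 0 := by positivity
  have hbval : b = 1 - a - e := by linarith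
  rw [hbval]
  field_simp
  ring
end

section
/- Let q be a probability density on 𝒳, let r(x) := p(x)/q(x) be the density ratio of a second positive density p with respect to q, and let r̂ : 𝒳 → (0,∞) be measurable. For X̃, X̃' i.i.d. ~ q, the following importance-reweighting identity holds: E[ r(X̃')·1{r̂(X̃') < r̂(X̃)} ] + E[ r(X̃')·1{r̂(X̃') ≤ r̂(X̃)} ] = 1 − E[ (r(X̃') − r(X̃))·1{r̂(X̃') > r̂(X̃)} ]. Consequently, twice the asymptotic (m → ∞) expected conformal p-value computed with score r̂, calibration from p, and test points from q equals 1 − E[ (r(X̃') − r(X̃))·1{r̂(X̃') > r̂(X̃)} ]. -/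
open MeasureTheory
open scoped ENNReal

open ProbabilityTheory Filter Topology

set_option linter.unusedSectionVars false
set_option linter.unusedVariables false

section Aux

variable {𝒳 : Type*} [MeasurableSpace 𝒳] {lam : Measure 𝒳} [SigmaFinite lam]

lemma densMeasure_isProb_s13 {q : 𝒳 → ℝ} (hqm : Measurable q) (hq0 : ∀ x, 0 ≤ q x)
    (hq1 : ∫ x, q x ∂lam = 1) : IsProbabilityMeasure (densMeasure lam q) := by
  have hqi : Integrable q lam := by
    by_contra h
    rw [integral_undef h] at hq1; norm_num at hq1
  constructor
  rw [densMeasure, withDensity_apply _ MeasurableSet.univ, Measure.restrict_univ,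
    ← ofReal_integral_eq_lintegral_ofReal hqi (Filter.Eventually.of_forall hq0), hq1,
    ENNReal.ofReal_one]

lemma densMeasure_ratio {p q : 𝒳 → ℝ} (hpm : Measurable p) (hqm : Measurable q)
    (hp0 : ∀ x, 0 ≤ p x) (hq0 : ∀ x, 0 < q x) :
    (densMeasure lam q).withDensity (fun y => ENNReal.ofReal (p y / q y)) = densMeasure lam p := by
  have hr : Measurable fun y => ENNReal.ofReal (p y / q y) := (hpm.div hqm).ennreal_ofReal
  ext T hT
  rw [withDensity_apply _ hT, densMeasure, densMeasure, withDensity_apply _ hT,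
    ← lintegral_indicator hT _, ← lintegral_indicator hT _,
    lintegral_withDensity_eq_lintegral_mul lam hqm.ennreal_ofReal (hr.indicator hT)]
  congr 1
  funext y
  by_cases hy : y ∈ T
  · simp only [Set.indicator_of_mem hy, Pi.mul_apply]
    rw [← ENNReal.ofReal_mul (hq0 y).le, mul_comm, div_mul_cancel₀ _ (hq0 y).ne']
  · simp [Set.indicator_of_notMem hy]

lemma lint_key {p q : 𝒳 → ℝ} (hpm : Measurable p) (hqm : Measurable q)
    (hp0 : ∀ x, 0 ≤ p x) (hq0 : ∀ x, 0 < q x)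
    (hν : IsProbabilityMeasure (densMeasure lam q))
    (hμ : IsProbabilityMeasure (densMeasure lam p))
    {S : Set (𝒳 × 𝒳)} (hS : MeasurableSet S) :
    ∫⁻ z, ENNReal.ofReal (S.indicator (fun z : 𝒳 × 𝒳 => p z.2 / q z.2) z)
      ∂((densMeasure lam q).prod (densMeasure lam q))
    = (densMeasure lam q).prod (densMeasure lam p) S := by
  haveI := hν; haveI := hμ
  have hg : Measurable fun y => ENNReal.ofReal (p y / q y) := (hpm.div hqm).ennreal_ofReal
  have h1 : ∀ z, ENNReal.ofReal (S.indicator (fun z : 𝒳 × 𝒳 => p z.2 / q z.2) z)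
      = S.indicator (fun z : 𝒳 × 𝒳 => ENNReal.ofReal (p z.2 / q z.2)) z := by
    intro z; by_cases hz : z ∈ S <;> simp [hz]
  simp_rw [h1]
  have hind : Measurable (S.indicator fun z : 𝒳 × 𝒳 => ENNReal.ofReal (p z.2 / q z.2)) :=
    (hg.comp measurable_snd).indicator hS
  rw [lintegral_prod _ hind.aemeasurable, Measure.prod_apply hS]
  refine lintegral_congr fun x => ?_
  have h2 : ∀ y, S.indicator (fun z : 𝒳 × 𝒳 => ENNReal.ofReal (p z.2 / q z.2)) (x, y)
      = (Prod.mk x ⁻¹' S).indicator (fun y => ENNReal.ofReal (p y / q y)) y := by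
    intro y; by_cases hy : (x, y) ∈ S <;> simp [Set.indicator, hy]
  simp_rw [h2]
  rw [lintegral_indicator (measurable_prodMk_left hS) _,
    ← withDensity_apply _ (measurable_prodMk_left hS),
    densMeasure_ratio hpm hqm hp0 hq0]

lemma int_key {p q : 𝒳 → ℝ} (hpm : Measurable p) (hqm : Measurable q)
    (hp0 : ∀ x, 0 ≤ p x) (hq0 : ∀ x, 0 < q x)
    (hν : IsProbabilityMeasure (densMeasure lam q))
    (hμ : IsProbabilityMeasure (densMeasure lam p))
    {S : Set (𝒳 × 𝒳)} (hS : MeasurableSet S) :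
    Integrable (S.indicator fun z : 𝒳 × 𝒳 => p z.2 / q z.2)
        ((densMeasure lam q).prod (densMeasure lam q)) ∧
    ∫ z, S.indicator (fun z : 𝒳 × 𝒳 => p z.2 / q z.2) z
        ∂((densMeasure lam q).prod (densMeasure lam q))
      = ((densMeasure lam q).prod (densMeasure lam p) S).toReal := by
  haveI := hν; haveI := hμ
  have hnn : 0 ≤ᵐ[(densMeasure lam q).prod (densMeasure lam q)]
      (S.indicator fun z : 𝒳 × 𝒳 => p z.2 / q z.2) :=
    Filter.Eventually.of_forall fun z =>
      Set.indicator_nonneg (fun z _ => div_nonneg (hp0 _) (hq0 _).le) z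
  have hmeas : Measurable (S.indicator fun z : 𝒳 × 𝒳 => p z.2 / q z.2) :=
    ((hpm.div hqm).comp measurable_snd).indicator hS
  constructor
  · refine ⟨hmeas.aestronglyMeasurable, ?_⟩
    rw [hasFiniteIntegral_iff_ofReal hnn, lint_key hpm hqm hp0 hq0 hν hμ hS]
    exact measure_lt_top _ _
  · rw [integral_eq_lintegral_of_nonneg_ae hnn hmeas.aestronglyMeasurable,
      lint_key hpm hqm hp0 hq0 hν hμ hS]

end Aux

/-- Importance reweighting. With strictly positive probability densities `p, q`,
density ratio `r = p/q`, a measurable positive estimated score `r̂`, and `X̃, X̃'` i.i.d. ~ q,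
`E[r(X̃')·1{r̂(X̃') < r̂(X̃)}] + E[r(X̃')·1{r̂(X̃') ≤ r̂(X̃)}]
  = 1 − E[(r(X̃') − r(X̃))·1{r̂(X̃') > r̂(X̃)}]`.
Consequently twice the asymptotic expected conformal p-value computed with score `r̂`,
calibration from `p` and test points from `q`, equals the same right-hand side. -/
theorem stmt13 {𝒳 Ω : Type*} [MeasurableSpace 𝒳] [MeasurableSpace Ω]
    (lam : Measure 𝒳) [SigmaFinite lam]
    (p q : 𝒳 → ℝ) (hpm : Measurable p) (hqm : Measurable q)
    (hp0 : ∀ x, 0 < p x) (hq0 : ∀ x, 0 < q x)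
    (hp1 : ∫ x, p x ∂lam = 1) (hq1 : ∫ x, q x ∂lam = 1)
    (rhat : 𝒳 → ℝ) (hrhatm : Measurable rhat) (hrhat0 : ∀ x, 0 < rhat x)
    (P : Measure Ω) [IsProbabilityMeasure P]
    (X : ℕ → Ω → 𝒳) (hXm : ∀ i, Measurable (X i))
    (Xt : Ω → 𝒳) (hXtm : Measurable Xt)
    (ξ : Ω → ℝ) (hξm : Measurable ξ)
    (hiid : iIndepFun X P)
    (hXlaw : ∀ i, Measure.map (X i) P = densMeasure lam p)
    (hXtlaw : Measure.map Xt P = densMeasure lam q)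
    (hξlaw : Measure.map ξ P = volume.restrict (Set.Icc (0 : ℝ) 1))
    (hindep : IndepFun (fun ω i => X i ω) (fun ω => (Xt ω, ξ ω)) P)
    (hindep2 : IndepFun Xt ξ P) :
    (∫ z : 𝒳 × 𝒳, (p z.2 / q z.2) * (if rhat z.2 < rhat z.1 then (1 : ℝ) else 0)
          ∂((densMeasure lam q).prod (densMeasure lam q))) +
        (∫ z : 𝒳 × 𝒳, (p z.2 / q z.2) * (if rhat z.2 ≤ rhat z.1 then (1 : ℝ) else 0)
          ∂((densMeasure lam q).prod (densMeasure lam q))) =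
      1 - (∫ z : 𝒳 × 𝒳, (p z.2 / q z.2 - p z.1 / q z.1) *
          (if rhat z.1 < rhat z.2 then (1 : ℝ) else 0)
          ∂((densMeasure lam q).prod (densMeasure lam q))) ∧
    Tendsto (fun m : ℕ => 2 * ∫ ω, (1 / (m + 1 : ℝ)) *
          ((∑ i ∈ Finset.range m, if rhat (X i ω) < rhat (Xt ω) then (1 : ℝ) else 0) +
            ξ ω * (1 + ∑ i ∈ Finset.range m,
              if rhat (X i ω) = rhat (Xt ω) then (1 : ℝ) else 0)) ∂P)
        atTop
        (𝓝 (1 - ∫ z : 𝒳 × 𝒳, (p z.2 / q z.2 - p z.1 / q z.1) *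
          (if rhat z.1 < rhat z.2 then (1 : ℝ) else 0)
          ∂((densMeasure lam q).prod (densMeasure lam q)))) := by
  classical
  have hp0' : ∀ x, 0 ≤ p x := fun x => (hp0 x).le
  have hq0' : ∀ x, 0 ≤ q x := fun x => (hq0 x).le
  haveI hνP : IsProbabilityMeasure (densMeasure lam q) := densMeasure_isProb_s13 hqm hq0' hq1
  haveI hμP : IsProbabilityMeasure (densMeasure lam p) := densMeasure_isProb_s13 hpm hp0' hp1
  set ν := densMeasure lam q with hνdef
  set μ := densMeasure lam p with hμdef
  set U := volume.restrict (Set.Icc (0 : ℝ) 1) with hUdef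
  haveI hUP : IsProbabilityMeasure U := by
    constructor
    rw [hUdef, Measure.restrict_apply_univ]
    simp [Real.volume_Icc]
  -- measurability of the basic sets
  have hrr : Measurable fun z : 𝒳 × 𝒳 => rhat z.1 := hrhatm.comp measurable_fst
  have hrs : Measurable fun z : 𝒳 × 𝒳 => rhat z.2 := hrhatm.comp measurable_snd
  have hS1m : MeasurableSet {z : 𝒳 × 𝒳 | rhat z.2 < rhat z.1} := measurableSet_lt hrs hrr
  have hS2m : MeasurableSet {z : 𝒳 × 𝒳 | rhat z.2 ≤ rhat z.1} := measurableSet_le hrs hrr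
  have hS3m : MeasurableSet {z : 𝒳 × 𝒳 | rhat z.1 < rhat z.2} := measurableSet_lt hrr hrs
  have hS2'm : MeasurableSet {z : 𝒳 × 𝒳 | rhat z.1 ≤ rhat z.2} := measurableSet_le hrr hrs
  have hSEm : MeasurableSet {z : 𝒳 × 𝒳 | rhat z.1 = rhat z.2} := measurableSet_eq_fun hrr hrs
  -- the real numbers a, b, c
  set a : ℝ := ((μ.prod ν) {z : 𝒳 × 𝒳 | rhat z.1 < rhat z.2}).toReal with hadef
  set b : ℝ := ((μ.prod ν) {z : 𝒳 × 𝒳 | rhat z.1 = rhat z.2}).toReal with hbdef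
  set c : ℝ := ((μ.prod ν) {z : 𝒳 × 𝒳 | rhat z.2 < rhat z.1}).toReal with hcdef
  -- swap identity
  have hswap : ∀ {S : Set (𝒳 × 𝒳)}, MeasurableSet S →
      (ν.prod μ) S = (μ.prod ν) (Prod.swap ⁻¹' S) := by
    intro S hS
    rw [← Measure.prod_swap, Measure.map_apply measurable_swap hS]
  have key : ∀ {S : Set (𝒳 × 𝒳)}, MeasurableSet S →
      Integrable (S.indicator fun z : 𝒳 × 𝒳 => p z.2 / q z.2) (ν.prod ν) ∧
      ∫ z, S.indicator (fun z : 𝒳 × 𝒳 => p z.2 / q z.2) z ∂(ν.prod ν)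
        = ((μ.prod ν) (Prod.swap ⁻¹' S)).toReal := by
    intro S hS
    obtain ⟨h1, h2⟩ := int_key hpm hqm hp0' hq0 hνP hμP hS
    refine ⟨h1, ?_⟩
    rw [h2, hswap hS]
  -- a + b + c = 1
  have habc : a + b + c = 1 := by
    have hd1 : Disjoint {z : 𝒳 × 𝒳 | rhat z.1 < rhat z.2} {z : 𝒳 × 𝒳 | rhat z.1 = rhat z.2} := by
      rw [Set.disjoint_left]
      intro z h3 hE
      simp only [Set.mem_setOf_eq] at h3 hE
      exact absurd hE (ne_of_lt h3)
    have hd2 : Disjoint ({z : 𝒳 × 𝒳 | rhat z.1 < rhat z.2} ∪ {z : 𝒳 × 𝒳 | rhat z.1 = rhat z.2})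
        {z : 𝒳 × 𝒳 | rhat z.2 < rhat z.1} := by
      rw [Set.disjoint_left]
      intro z hz h1
      simp only [Set.mem_union, Set.mem_setOf_eq] at hz h1
      rcases hz with h3 | hE
      · exact absurd h1 (lt_asymm h3)
      · exact absurd h1 (not_lt_of_ge (le_of_eq hE))
    have hcover : ({z : 𝒳 × 𝒳 | rhat z.1 < rhat z.2} ∪ {z : 𝒳 × 𝒳 | rhat z.1 = rhat z.2}) ∪
        {z : 𝒳 × 𝒳 | rhat z.2 < rhat z.1} = Set.univ := by
      ext z
      simp only [Set.mem_union, Set.mem_setOf_eq, Set.mem_univ, iff_true]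
      rcases lt_trichotomy (rhat z.1) (rhat z.2) with h | h | h
      · exact Or.inl (Or.inl h)
      · exact Or.inl (Or.inr h)
      · exact Or.inr h
    have h1 : (μ.prod ν) (({z : 𝒳 × 𝒳 | rhat z.1 < rhat z.2} ∪
        {z : 𝒳 × 𝒳 | rhat z.1 = rhat z.2}) ∪ {z : 𝒳 × 𝒳 | rhat z.2 < rhat z.1}) = 1 := by
      rw [hcover]; exact measure_univ
    rw [measure_union hd2 hS1m, measure_union hd1 hSEm] at h1
    have := congrArg ENNReal.toReal h1
    rw [ENNReal.toReal_add (by finiteness) (by finiteness),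
      ENNReal.toReal_add (by finiteness) (by finiteness), ENNReal.toReal_one] at this
    simpa [hadef, hbdef, hcdef] using this
  -- first integral
  have conv1 : (∫ z : 𝒳 × 𝒳, (p z.2 / q z.2) * (if rhat z.2 < rhat z.1 then (1 : ℝ) else 0)
      ∂(ν.prod ν)) = a := by
    have h0 : (fun z : 𝒳 × 𝒳 => (p z.2 / q z.2) * (if rhat z.2 < rhat z.1 then (1 : ℝ) else 0))
        = ({z : 𝒳 × 𝒳 | rhat z.2 < rhat z.1}.indicator fun z : 𝒳 × 𝒳 => p z.2 / q z.2) := by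
      funext z
      by_cases h : rhat z.2 < rhat z.1 <;> simp [Set.indicator, h]
    rw [h0, (key hS1m).2]
    rfl
  -- second integral
  have conv2 : (∫ z : 𝒳 × 𝒳, (p z.2 / q z.2) * (if rhat z.2 ≤ rhat z.1 then (1 : ℝ) else 0)
      ∂(ν.prod ν)) = a + b := by
    have h0 : (fun z : 𝒳 × 𝒳 => (p z.2 / q z.2) * (if rhat z.2 ≤ rhat z.1 then (1 : ℝ) else 0))
        = ({z : 𝒳 × 𝒳 | rhat z.2 ≤ rhat z.1}.indicator fun z : 𝒳 × 𝒳 => p z.2 / q z.2) := by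
      funext z
      by_cases h : rhat z.2 ≤ rhat z.1 <;> simp [Set.indicator, h]
    rw [h0, (key hS2m).2]
    have hpre : Prod.swap ⁻¹' {z : 𝒳 × 𝒳 | rhat z.2 ≤ rhat z.1}
        = {z : 𝒳 × 𝒳 | rhat z.1 ≤ rhat z.2} := rfl
    rw [hpre]
    have hsplit : {z : 𝒳 × 𝒳 | rhat z.1 ≤ rhat z.2}
        = {z : 𝒳 × 𝒳 | rhat z.1 < rhat z.2} ∪ {z : 𝒳 × 𝒳 | rhat z.1 = rhat z.2} := by
      ext z
      simp only [Set.mem_union, Set.mem_setOf_eq]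
      exact le_iff_lt_or_eq
    have hd1 : Disjoint {z : 𝒳 × 𝒳 | rhat z.1 < rhat z.2} {z : 𝒳 × 𝒳 | rhat z.1 = rhat z.2} := by
      rw [Set.disjoint_left]
      intro z h3 hE
      simp only [Set.mem_setOf_eq] at h3 hE
      exact absurd hE (ne_of_lt h3)
    rw [hsplit, measure_union hd1 hSEm, ENNReal.toReal_add (by finiteness) (by finiteness)]
  -- third integral (the subtraction one)
  -- first-coordinate indicator transfer by swap
  have heswap : ({z : 𝒳 × 𝒳 | rhat z.2 < rhat z.1}.indicator
        (fun z : 𝒳 × 𝒳 => p z.2 / q z.2)) ∘ Prod.swap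
      = {z : 𝒳 × 𝒳 | rhat z.1 < rhat z.2}.indicator (fun z : 𝒳 × 𝒳 => p z.1 / q z.1) := by
    funext z
    by_cases h : rhat z.1 < rhat z.2 <;>
      simp [Set.indicator, Function.comp, h]
  have hint1 : Integrable ({z : 𝒳 × 𝒳 | rhat z.1 < rhat z.2}.indicator
      (fun z : 𝒳 × 𝒳 => p z.1 / q z.1)) (ν.prod ν) := by
    have h0 := (key hS1m).1
    have h1 : Integrable ({z : 𝒳 × 𝒳 | rhat z.2 < rhat z.1}.indicator
        (fun z : 𝒳 × 𝒳 => p z.2 / q z.2)) (Measure.map Prod.swap (ν.prod ν)) := by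
      rw [Measure.prod_swap]; exact h0
    have h2 := (integrable_map_measure h1.aestronglyMeasurable
      measurable_swap.aemeasurable).mp h1
    rwa [heswap] at h2
  have hval1 : ∫ z, {z : 𝒳 × 𝒳 | rhat z.1 < rhat z.2}.indicator
      (fun z : 𝒳 × 𝒳 => p z.1 / q z.1) z ∂(ν.prod ν) = a := by
    have h1 : AEStronglyMeasurable ({z : 𝒳 × 𝒳 | rhat z.2 < rhat z.1}.indicator
        (fun z : 𝒳 × 𝒳 => p z.2 / q z.2)) (Measure.map Prod.swap (ν.prod ν)) := by
      rw [Measure.prod_swap]; exact (key hS1m).1.aestronglyMeasurable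
    have h2 := integral_map (measurable_swap.aemeasurable
      (μ := ν.prod ν) (f := Prod.swap (α := 𝒳) (β := 𝒳))) h1
    rw [Measure.prod_swap] at h2
    calc ∫ z, {z : 𝒳 × 𝒳 | rhat z.1 < rhat z.2}.indicator
          (fun z : 𝒳 × 𝒳 => p z.1 / q z.1) z ∂(ν.prod ν)
        = ∫ z, (({z : 𝒳 × 𝒳 | rhat z.2 < rhat z.1}.indicator
            (fun z : 𝒳 × 𝒳 => p z.2 / q z.2)) ∘ Prod.swap) z ∂(ν.prod ν) := by rw [heswap]
      _ = ∫ z, {z : 𝒳 × 𝒳 | rhat z.2 < rhat z.1}.indicator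
            (fun z : 𝒳 × 𝒳 => p z.2 / q z.2) z ∂(ν.prod ν) := h2.symm
      _ = a := by rw [(key hS1m).2]; rfl
  have conv3 : (∫ z : 𝒳 × 𝒳, (p z.2 / q z.2 - p z.1 / q z.1) *
      (if rhat z.1 < rhat z.2 then (1 : ℝ) else 0) ∂(ν.prod ν)) = c - a := by
    have h0 : (fun z : 𝒳 × 𝒳 => (p z.2 / q z.2 - p z.1 / q z.1) *
        (if rhat z.1 < rhat z.2 then (1 : ℝ) else 0))
        = fun z => {z : 𝒳 × 𝒳 | rhat z.1 < rhat z.2}.indicator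
            (fun z : 𝒳 × 𝒳 => p z.2 / q z.2) z
          - {z : 𝒳 × 𝒳 | rhat z.1 < rhat z.2}.indicator
            (fun z : 𝒳 × 𝒳 => p z.1 / q z.1) z := by
      funext z
      by_cases h : rhat z.1 < rhat z.2 <;> simp [Set.indicator, h]
    rw [h0, integral_sub (key hS3m).1 hint1, (key hS3m).2, hval1]
    rfl
  refine ⟨by rw [conv1, conv2, conv3]; linarith, ?_⟩
  -- part 2
  rw [conv3]
  have htarget : 1 - (c - a) = 2 * a + b := by linarith
  rw [htarget]

  -- uniform distribution facts
  have hUint : ∫ t, t ∂U = 1 / 2 := by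
    rw [hUdef,
      show (∫ t, t ∂(volume.restrict (Set.Icc (0:ℝ) 1))) = ∫ t in Set.Icc (0:ℝ) 1, t from rfl,
      MeasureTheory.integral_Icc_eq_integral_Ioc,
      ← intervalIntegral.integral_of_le (by norm_num : (0:ℝ) ≤ 1), integral_id]
    norm_num
  have hξae : ∀ᵐ ω ∂P, ξ ω ∈ Set.Icc (0 : ℝ) 1 := by
    rw [ae_iff]
    have hset : {ω | ¬ ξ ω ∈ Set.Icc (0 : ℝ) 1} = ξ ⁻¹' (Set.Icc (0 : ℝ) 1)ᶜ := rfl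
    rw [hset, ← Measure.map_apply hξm measurableSet_Icc.compl, hξlaw,
      Measure.restrict_apply measurableSet_Icc.compl]
    simp [Set.compl_inter_self]
  have hξint : Integrable ξ P := by
    refine Integrable.mono' (integrable_const 1) hξm.aestronglyMeasurable ?_
    filter_upwards [hξae] with ω h
    rw [Real.norm_eq_abs, abs_le]
    exact ⟨by linarith [h.1], h.2⟩
  have hξval : ∫ ω, ξ ω ∂P = 1 / 2 := by
    have h2 := integral_map (μ := P) (φ := ξ) hξm.aemeasurable (f := fun t : ℝ => t)
      measurable_id.aestronglyMeasurable
    rw [hξlaw] at h2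
    rw [← h2]
    exact hUint
  -- per-index facts
  have hfm : Measurable fun z : 𝒳 × 𝒳 => if rhat z.1 < rhat z.2 then (1 : ℝ) else 0 :=
    Measurable.ite hS3m measurable_const measurable_const
  have hgm : Measurable fun z : 𝒳 × 𝒳 => if rhat z.1 = rhat z.2 then (1 : ℝ) else 0 :=
    Measurable.ite hSEm measurable_const measurable_const
  have hmapI : ∀ i, Measure.map (fun ω => (X i ω, Xt ω)) P = μ.prod ν := by
    intro i
    have hpairI : IndepFun (X i) Xt P := hindep.comp (measurable_pi_apply i) measurable_fst
    rw [← hXlaw i, ← hXtlaw]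
    exact (indepFun_iff_map_prod_eq_prod_map_map (hXm i).aemeasurable hXtm.aemeasurable).mp hpairI
  have hfint : ∀ i, Integrable (fun ω => if rhat (X i ω) < rhat (Xt ω) then (1 : ℝ) else 0) P := by
    intro i
    refine Integrable.mono' (integrable_const 1) ?_ (Filter.Eventually.of_forall fun ω => ?_)
    · exact (hfm.comp ((hXm i).prodMk hXtm)).aestronglyMeasurable
    · by_cases h : rhat (X i ω) < rhat (Xt ω) <;> simp [h]
  have hfval : ∀ i, ∫ ω, (if rhat (X i ω) < rhat (Xt ω) then (1 : ℝ) else 0) ∂P = a := by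
    intro i
    have h2 := integral_map (μ := P) ((hXm i).prodMk hXtm).aemeasurable
      (f := fun z : 𝒳 × 𝒳 => if rhat z.1 < rhat z.2 then (1 : ℝ) else 0)
      hfm.aestronglyMeasurable
    rw [hmapI i] at h2
    rw [← h2]
    have h0 : (fun z : 𝒳 × 𝒳 => if rhat z.1 < rhat z.2 then (1 : ℝ) else 0)
        = {z : 𝒳 × 𝒳 | rhat z.1 < rhat z.2}.indicator fun _ => (1 : ℝ) := by
      funext z; by_cases h : rhat z.1 < rhat z.2 <;> simp [Set.indicator, h]
    rw [h0, hadef]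
    exact integral_indicator_one hS3m
  -- 3-fold product facts
  have hSE3m : MeasurableSet {w : 𝒳 × 𝒳 × ℝ | rhat w.1 = rhat w.2.1} :=
    measurableSet_eq_fun (hrhatm.comp measurable_fst)
      (hrhatm.comp (measurable_fst.comp measurable_snd))
  have hFm : Measurable fun w : 𝒳 × 𝒳 × ℝ =>
      w.2.2 * (if rhat w.1 = rhat w.2.1 then (1 : ℝ) else 0) :=
    (measurable_snd.comp measurable_snd).mul
      (Measurable.ite hSE3m measurable_const measurable_const)
  have hpair2 : Measure.map (fun ω => (Xt ω, ξ ω)) P = ν.prod U := by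
    rw [← hXtlaw, ← hξlaw]
    exact (indepFun_iff_map_prod_eq_prod_map_map hXtm.aemeasurable hξm.aemeasurable).mp hindep2
  have hmap3 : ∀ i, Measure.map (fun ω => (X i ω, (Xt ω, ξ ω))) P = μ.prod (ν.prod U) := by
    intro i
    have hIi : IndepFun (X i) (fun ω => (Xt ω, ξ ω)) P :=
      hindep.comp (measurable_pi_apply i) measurable_id
    rw [← hXlaw i, ← hpair2]
    exact (indepFun_iff_map_prod_eq_prod_map_map (hXm i).aemeasurable
      (hXtm.prodMk hξm).aemeasurable).mp hIi
  have hae3 : ∀ᵐ w ∂(μ.prod (ν.prod U)), w.2.2 ∈ Set.Icc (0 : ℝ) 1 := by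
    rw [ae_iff]
    have hset : {w : 𝒳 × 𝒳 × ℝ | ¬ w.2.2 ∈ Set.Icc (0 : ℝ) 1}
        = Set.univ ×ˢ (Set.univ ×ˢ (Set.Icc (0 : ℝ) 1)ᶜ) := by
      ext w; simp
    rw [hset, Measure.prod_prod, Measure.prod_prod, hUdef,
      Measure.restrict_apply measurableSet_Icc.compl]
    simp [Set.compl_inter_self]
  have hFint : Integrable (fun w : 𝒳 × 𝒳 × ℝ =>
      w.2.2 * (if rhat w.1 = rhat w.2.1 then (1 : ℝ) else 0)) (μ.prod (ν.prod U)) := by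
    refine Integrable.mono' (integrable_const 1) hFm.aestronglyMeasurable ?_
    filter_upwards [hae3] with w hw
    rw [norm_mul]
    have h1 : ‖w.2.2‖ ≤ 1 := by rw [Real.norm_eq_abs, abs_le]; exact ⟨by linarith [hw.1], hw.2⟩
    have h2 : ‖if rhat w.1 = rhat w.2.1 then (1:ℝ) else 0‖ ≤ 1 := by
      by_cases h : rhat w.1 = rhat w.2.1 <;> simp [h]
    calc ‖w.2.2‖ * ‖if rhat w.1 = rhat w.2.1 then (1:ℝ) else 0‖
        ≤ 1 * 1 := mul_le_mul h1 h2 (norm_nonneg _) zero_le_one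
      _ = 1 := mul_one 1
  have hgint2 : Integrable (fun z : 𝒳 × 𝒳 => if rhat z.1 = rhat z.2 then (1:ℝ) else 0)
      (μ.prod ν) := by
    refine Integrable.mono' (integrable_const 1) hgm.aestronglyMeasurable
      (Filter.Eventually.of_forall fun z => ?_)
    by_cases h : rhat z.1 = rhat z.2 <;> simp [h]
  have hFval : ∫ w : 𝒳 × 𝒳 × ℝ, w.2.2 * (if rhat w.1 = rhat w.2.1 then (1 : ℝ) else 0)
      ∂(μ.prod (ν.prod U)) = b / 2 := by
    rw [MeasureTheory.integral_prod _ hFint]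
    have hinner : ∀ x : 𝒳, (∫ y : 𝒳 × ℝ, y.2 * (if rhat x = rhat y.1 then (1 : ℝ) else 0)
        ∂(ν.prod U)) = (∫ y, (if rhat x = rhat y then (1 : ℝ) else 0) ∂ν) * (1 / 2) := by
      intro x
      have h0 : (fun y : 𝒳 × ℝ => y.2 * (if rhat x = rhat y.1 then (1 : ℝ) else 0))
          = fun y : 𝒳 × ℝ => (if rhat x = rhat y.1 then (1 : ℝ) else 0) * y.2 := by
        funext y; ring
      rw [h0, integral_prod_mul (fun s => if rhat x = rhat s then (1:ℝ) else 0)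
        (fun t : ℝ => t), hUint]
    simp only [hinner]
    rw [integral_mul_const]
    have hb2 : ∫ x, ∫ y, (if rhat x = rhat y then (1:ℝ) else 0) ∂ν ∂μ = b := by
      have hGd := MeasureTheory.integral_prod
        (f := fun z : 𝒳 × 𝒳 => if rhat z.1 = rhat z.2 then (1:ℝ) else 0) hgint2
      simp only [] at hGd
      rw [← hGd]
      have h0 : (fun z : 𝒳 × 𝒳 => if rhat z.1 = rhat z.2 then (1 : ℝ) else 0)
          = {z : 𝒳 × 𝒳 | rhat z.1 = rhat z.2}.indicator fun _ => (1 : ℝ) := by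
        funext z; by_cases h : rhat z.1 = rhat z.2 <;> simp [Set.indicator, h]
      rw [h0, hbdef]
      exact integral_indicator_one hSEm
    rw [hb2]
    ring
  have hgval : ∀ i, ∫ ω, ξ ω * (if rhat (X i ω) = rhat (Xt ω) then (1 : ℝ) else 0) ∂P
      = b / 2 := by
    intro i
    have h2 := integral_map (μ := P) ((hXm i).prodMk (hXtm.prodMk hξm)).aemeasurable
      (f := fun w : 𝒳 × 𝒳 × ℝ => w.2.2 * (if rhat w.1 = rhat w.2.1 then (1 : ℝ) else 0))
      hFm.aestronglyMeasurable
    rw [hmap3 i] at h2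
    have h3 : ∫ ω, ξ ω * (if rhat (X i ω) = rhat (Xt ω) then (1 : ℝ) else 0) ∂P
        = ∫ ω, (fun w : 𝒳 × 𝒳 × ℝ => w.2.2 * (if rhat w.1 = rhat w.2.1 then (1 : ℝ) else 0))
            ((X i ω, (Xt ω, ξ ω))) ∂P := rfl
    rw [h3, ← h2, hFval]
  have hgint : ∀ i, Integrable
      (fun ω => ξ ω * (if rhat (X i ω) = rhat (Xt ω) then (1 : ℝ) else 0)) P := by
    intro i
    refine Integrable.mono' (integrable_const 1)
      ((hξm.mul (hgm.comp ((hXm i).prodMk hXtm))).aestronglyMeasurable) ?_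
    filter_upwards [hξae] with ω h
    rw [norm_mul]
    have h1 : ‖ξ ω‖ ≤ 1 := by rw [Real.norm_eq_abs, abs_le]; exact ⟨by linarith [h.1], h.2⟩
    have h2 : ‖if rhat (X i ω) = rhat (Xt ω) then (1:ℝ) else 0‖ ≤ 1 := by
      by_cases hc : rhat (X i ω) = rhat (Xt ω) <;> simp [hc]
    calc ‖ξ ω‖ * ‖if rhat (X i ω) = rhat (Xt ω) then (1:ℝ) else 0‖
        ≤ 1 * 1 := mul_le_mul h1 h2 (norm_nonneg _) zero_le_one
      _ = 1 := mul_one 1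
  -- the per-m expectation
  have hEm : ∀ m : ℕ, (∫ ω, (1 / (m + 1 : ℝ)) *
      ((∑ i ∈ Finset.range m, if rhat (X i ω) < rhat (Xt ω) then (1 : ℝ) else 0) +
        ξ ω * (1 + ∑ i ∈ Finset.range m,
          if rhat (X i ω) = rhat (Xt ω) then (1 : ℝ) else 0)) ∂P)
      = (1 / (m + 1 : ℝ)) * (m * a + (1 / 2 + m * (b / 2))) := by
    intro m
    rw [integral_const_mul]
    congr 1
    have hsint : Integrable (fun ω => ∑ i ∈ Finset.range m,
        if rhat (X i ω) < rhat (Xt ω) then (1 : ℝ) else 0) P :=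
      integrable_finset_sum _ fun i _ => hfint i
    have hs2int : Integrable (fun ω => ∑ i ∈ Finset.range m,
        ξ ω * (if rhat (X i ω) = rhat (Xt ω) then (1 : ℝ) else 0)) P :=
      integrable_finset_sum _ fun i _ => hgint i
    have hrw : (fun ω => (∑ i ∈ Finset.range m,
          if rhat (X i ω) < rhat (Xt ω) then (1:ℝ) else 0) +
        ξ ω * (1 + ∑ i ∈ Finset.range m,
          if rhat (X i ω) = rhat (Xt ω) then (1:ℝ) else 0))
        = fun ω => (∑ i ∈ Finset.range m,
            if rhat (X i ω) < rhat (Xt ω) then (1:ℝ) else 0) +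
          (ξ ω + ∑ i ∈ Finset.range m,
            ξ ω * (if rhat (X i ω) = rhat (Xt ω) then (1:ℝ) else 0)) := by
      funext ω
      rw [mul_add, mul_one, Finset.mul_sum]
    have hadd2 : Integrable (fun ω => ξ ω + ∑ i ∈ Finset.range m,
        ξ ω * (if rhat (X i ω) = rhat (Xt ω) then (1:ℝ) else 0)) P := hξint.add hs2int
    rw [hrw, integral_add hsint hadd2, integral_add hξint hs2int,
      integral_finset_sum _ fun i _ => hfint i, integral_finset_sum _ fun i _ => hgint i]
    simp only [hfval, hgval, hξval, Finset.sum_const, Finset.card_range, nsmul_eq_mul]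
  -- the limit
  have hlim : Tendsto (fun m : ℕ => (2 * a + b) + (1 - (2 * a + b)) * (1 / ((m:ℝ) + 1)))
      atTop (𝓝 (2 * a + b)) := by
    have h := (tendsto_const_nhds (x := (2 : ℝ) * a + b) (f := atTop (α := ℕ))).add
      (tendsto_one_div_add_atTop_nhds_zero_nat.const_mul (1 - (2 * a + b)))
    simpa using h
  refine hlim.congr fun m => ?_
  rw [hEm m]
  have hm : (m : ℝ) + 1 ≠ 0 := by positivity
  field_simp
  ring
end
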